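/- arXiv:2011.06660 — 7 statements merged into one kernel-verified Lean document; each statement's English description precedes it below -/
import Mathlib

section
/- There exists n₀ ∈ ℕ such that for every n ≥ n₀ the following holds. Let v* ∈ G_{n+1} and let φ : G_{n+1} → ℕ satisfy φ(x) ≤ 200·2^n for all x ∈ G_{n+1}, and suppose every small cube C(v,w) in G_{n+1} other than the singleton cube C(v*,v*) admits a dominating direction with respect to φ. Then the high-degree imitation game associated with φ has a unique mixed Nash equilibrium: the pure strategy profile in which every player A_i and every player B_i plays v*_i with probability 1 (i.e., a = b = v*). In particular, this pure profile is a Nash equilibrium and every mixed Nash equilibrium coincides with it. -/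
/-- Membership in the integer grid `G_{n+1} = {0,…,29}^{n+1}`. -/
def inGrid (n : ℕ) (x : Fin (n+1) → ℤ) : Prop := ∀ i, 0 ≤ x i ∧ x i ≤ 29

/-- Membership in the (small) cube `C(v,w)`. -/
def cubeMem (n : ℕ) (v w x : Fin (n+1) → ℤ) : Prop :=
  inGrid n x ∧ ∀ i, v i ≤ x i ∧ x i ≤ w i

/-- `C(v,w)` is a small cube: `v,w ∈ G_{n+1}`, `v ≤ w`, and edge-lengths at most 4. -/
def IsSmallCube (n : ℕ) (v w : Fin (n+1) → ℤ) : Prop :=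
  inGrid n v ∧ inGrid n w ∧ (∀ i, v i ≤ w i) ∧ (∀ i, w i - v i ≤ 4)

/-- `d` is one of the `2(n+1)` directions `±e_1,…,±e_{n+1}`. -/
def IsDirection (n : ℕ) (d : Fin (n+1) → ℤ) : Prop :=
  ∃ i : Fin (n+1), d = Pi.single i 1 ∨ d = Pi.single i (-1)

/-- `d` is a dominating direction of the small cube `C(v,w)` with respect to `φ`. -/
def IsDominatingDir (n : ℕ) (φ : (Fin (n+1) → ℤ) → ℝ) (v w d : Fin (n+1) → ℤ) : Prop :=
  IsDirection n d ∧
  (∃ x, cubeMem n v w x ∧ inGrid n (x + d)) ∧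
  ∀ x, cubeMem n v w x → inGrid n (x + d) → φ x > φ (x + d)

/-- Expected utility of player `p` under an independent mixed profile `σ`. -/
noncomputable def expUtil {I : Type} [Fintype I] [DecidableEq I] {A : I → Type}
    [∀ i, Fintype (A i)] (u : I → ((∀ j, A j) → ℝ)) (σ : ∀ i, A i → ℝ) (p : I) : ℝ :=
  ∑ prof : ∀ j, A j, (∏ q, σ q (prof q)) * u p prof

/-- `σ` is a valid mixed strategy profile (a probability distribution for each player). -/
def IsMixedProfile {I : Type} {A : I → Type} [∀ i, Fintype (A i)]
    (σ : ∀ i, A i → ℝ) : Prop :=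
  (∀ i a, 0 ≤ σ i a) ∧ ∀ i, (∑ a, σ i a) = 1

/-- The pure (deterministic) mixed strategy playing `a`. -/
def purePlay {α : Type} [DecidableEq α] (a : α) : α → ℝ :=
  fun x => if x = a then 1 else 0

/-- `σ` is a mixed Nash equilibrium of the game `u`: it is a valid mixed profile and no
player can profit by deviating to any pure action. -/
def IsMixedNash {I : Type} [Fintype I] [DecidableEq I] {A : I → Type}
    [∀ i, Fintype (A i)] [∀ i, DecidableEq (A i)]
    (u : I → ((∀ j, A j) → ℝ)) (σ : ∀ i, A i → ℝ) : Prop :=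
  IsMixedProfile σ ∧
  ∀ (p : I) (a' : A p),
    expUtil u σ p ≥ expUtil u (Function.update σ p (purePlay a')) p

/-- The high-degree imitation game: players `A_1,…,A_{n+1}` (left) and `B_1,…,B_{n+1}`
(right), each choosing a coordinate in `{0,…,29}`; Alice's team gets
`-Σ (a_i - b_i)^{2n} - 2φ(a)`, Bob's team gets `-Σ (a_i - b_i)^{2n} - 2φ(b)`. -/
noncomputable def hdImitationU (n : ℕ) (φ : (Fin (n+1) → ℤ) → ℝ) :
    (Fin (n+1) ⊕ Fin (n+1)) → ((Fin (n+1) ⊕ Fin (n+1)) → Fin 30) → ℝ :=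
  fun p prof =>
    -(∑ i : Fin (n+1),
        (((prof (Sum.inl i) : ℕ) : ℝ) - ((prof (Sum.inr i) : ℕ) : ℝ)) ^ (2 * n)) -
    2 * (Sum.elim (fun _ => φ (fun i => ((prof (Sum.inl i) : ℕ) : ℤ)))
                  (fun _ => φ (fun i => ((prof (Sum.inr i) : ℕ) : ℤ))) p)

/-!
Write each payoff as minus an integer cost: the sum of the `2n`-th powers of the gaps between the
two players of every coordinate, plus twice the team's `φ`. A player at distance `x ≥ 2` from its
opponent lowers its distance term by `x ^ (2n) - (x - 1) ^ (2n) ≥ 2 ^ (2n - 1)` by stepping towards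
it, which for large `n` beats any change `≤ 400 · 2 ^ n` of `2 φ`. In a mixed equilibrium every
action in a support is a best response, so such steps cannot pay off on average. Hence each
support lies within one of the opponent's support and has diameter at most two, and the supports
of all players span a small cube `C(v, w)`.

If that cube were not `C(v*, v*)` it would have a dominating direction `± e_i`, and the player
sitting on the face `v_i` (or `w_i`) would gain by stepping along it: `φ` is integer-valued, so it
drops by at least one, while the distance to the opponent grows by at most one. So every
equilibrium is the pure profile `v*`; conversely this profile is an equilibrium because `v*`
minimises `φ` on the grid, a minimiser of `φ` having no dominating direction.
-/

open Function Finset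

section MixedStrategies

variable {I : Type} [DecidableEq I] {A : I → Type}

lemma update_piSplitAt_symm (p : I) (b c : A p) (r : ∀ q : {q // q ≠ p}, A q) :
    update ((Equiv.piSplitAt p A).symm (b, r)) p c = (Equiv.piSplitAt p A).symm (c, r) := by
  ext q
  by_cases hq : q = p
  · subst hq; simp
  · simp [hq]

variable [Fintype I]

lemma prod_apply_piSplitAt_symm (σ : ∀ i, A i → ℝ) (p : I) (b : A p)
    (r : ∀ q : {q // q ≠ p}, A q) :
    ∏ q, σ q ((Equiv.piSplitAt p A).symm (b, r) q) = σ p b * ∏ q : {q // q ≠ p}, σ q (r q) := by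
  rw [Fintype.prod_eq_mul_prod_subtype_ne _ p]
  congr 1
  · simp
  · exact Fintype.prod_congr _ _ fun q => by simp [q.2]

variable [∀ i, Fintype (A i)]

/-- Expected payoff of `p` when `p` plays `b` and the others play `σ`. -/
noncomputable def condExpUtil (u : I → (∀ j, A j) → ℝ) (σ : ∀ i, A i → ℝ) (p : I) (b : A p) :
    ℝ :=
  ∑ r : ∀ q : {q // q ≠ p}, A q,
    (∏ q : {q // q ≠ p}, σ q (r q)) * u p ((Equiv.piSplitAt p A).symm (b, r))

lemma expUtil_eq_sum_condExpUtil (u : I → (∀ j, A j) → ℝ) (σ : ∀ i, A i → ℝ) (p : I) :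
    expUtil u σ p = ∑ b, σ p b * condExpUtil u σ p b := by
  rw [expUtil, ← (Equiv.piSplitAt p A).symm.sum_comp, Fintype.sum_prod_type]
  refine Finset.sum_congr rfl fun b _ => ?_
  rw [condExpUtil, Finset.mul_sum]
  exact Finset.sum_congr rfl fun r _ => by rw [prod_apply_piSplitAt_symm, mul_assoc]

lemma condExpUtil_update_self (u : I → (∀ j, A j) → ℝ) (σ : ∀ i, A i → ℝ) (p : I)
    (τ : A p → ℝ) : condExpUtil u (update σ p τ) p = condExpUtil u σ p := by
  ext b
  refine Finset.sum_congr rfl fun r _ => ?_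
  congr 1
  exact Fintype.prod_congr _ _ fun q => by rw [update_of_ne q.2]

lemma sum_prod_eq_one {σ : ∀ i, A i → ℝ} (hσ : IsMixedProfile σ) (p : I) :
    ∑ r : ∀ q : {q // q ≠ p}, A q, ∏ q : {q // q ≠ p}, σ q (r q) = 1 := by
  rw [← Fintype.prod_sum]
  simp [hσ.2]

variable [∀ i, DecidableEq (A i)]

lemma sum_purePlay_mul {α : Type} [Fintype α] [DecidableEq α] (a : α) (f : α → ℝ) :
    ∑ b, purePlay a b * f b = f a := by
  simp [purePlay]

lemma expUtil_update_purePlay (u : I → (∀ j, A j) → ℝ) (σ : ∀ i, A i → ℝ) (p : I) (a : A p) :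
    expUtil u (update σ p (purePlay a)) p = condExpUtil u σ p a := by
  rw [expUtil_eq_sum_condExpUtil, condExpUtil_update_self, update_self, sum_purePlay_mul]

lemma IsMixedNash.condExpUtil_le {u : I → (∀ j, A j) → ℝ} {σ : ∀ i, A i → ℝ}
    (hσ : IsMixedNash u σ) {p : I} {k : A p} (hk : σ p k ≠ 0) (j : A p) :
    condExpUtil u σ p j ≤ condExpUtil u σ p k := by
  have hW : ∀ b, condExpUtil u σ p b ≤ expUtil u σ p := fun b => by
    rw [← expUtil_update_purePlay]; exact hσ.2 p b
  have hzero : ∑ b, σ p b * (expUtil u σ p - condExpUtil u σ p b) = 0 := by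
    simp only [mul_sub, Finset.sum_sub_distrib, ← Finset.sum_mul, hσ.1.2 p, one_mul]
    rw [← expUtil_eq_sum_condExpUtil, sub_self]
  have hk' := (Finset.sum_eq_zero_iff_of_nonneg fun b _ =>
    mul_nonneg (hσ.1.1 p b) (sub_nonneg.2 (hW b))).1 hzero k (Finset.mem_univ k)
  have : condExpUtil u σ p k = expUtil u σ p := by
    linarith [(mul_eq_zero.1 hk').resolve_left hk]
  exact this ▸ hW j

/-- Two simultaneous deviations, because bounding the support of a player needs the sum of the
gains of moving its lowest action up and its highest action down against the same opponents. -/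
lemma IsMixedNash.exists_support_add_le {u : I → (∀ j, A j) → ℝ} {σ : ∀ i, A i → ℝ}
    (hσ : IsMixedNash u σ) {p : I} {k k' : A p} (hk : σ p k ≠ 0) (hk' : σ p k' ≠ 0)
    (j j' : A p) :
    ∃ x : ∀ i, A i, (∀ q, σ q (x q) ≠ 0) ∧
      u p (update x p j) + u p (update x p j') ≤ u p (update x p k) + u p (update x p k') := by
  by_contra! hgain
  set e := Equiv.piSplitAt p A
  set P : (∀ q : {q // q ≠ p}, A q) → ℝ := fun r => ∏ q : {q // q ≠ p}, σ q (r q)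
  have hP : ∀ r, 0 ≤ P r := fun r => Finset.prod_nonneg fun q _ => hσ.1.1 q (r q)
  have hΔ : ∀ r, P r ≠ 0 → u p (e.symm (k, r)) + u p (e.symm (k', r)) <
      u p (e.symm (j, r)) + u p (e.symm (j', r)) := by
    intro r hr
    have hsupp : ∀ q, σ q (e.symm (k, r) q) ≠ 0 := by
      intro q
      by_cases hq : q = p
      · subst hq; simpa [e] using hk
      · simpa [e, hq] using Finset.prod_ne_zero_iff.1 hr ⟨q, hq⟩ (Finset.mem_univ _)
    simpa only [e, update_piSplitAt_symm] using hgain _ hsupp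
  obtain ⟨r₀, hr₀⟩ : ∃ r, P r ≠ 0 := by
    by_contra! h
    simpa [P, h] using sum_prod_eq_one hσ.1 p
  have hpos : 0 < ∑ r, P r * ((u p (e.symm (j, r)) + u p (e.symm (j', r))) -
      (u p (e.symm (k, r)) + u p (e.symm (k', r)))) := by
    refine Finset.sum_pos' (fun r _ => ?_) ⟨r₀, Finset.mem_univ _, ?_⟩
    · rcases eq_or_ne (P r) 0 with h | h
      · simp [h]
      · exact mul_nonneg (hP r) (sub_nonneg.2 (hΔ r h).le)
    · exact mul_pos (lt_of_le_of_ne (hP r₀) (Ne.symm hr₀)) (sub_pos.2 (hΔ r₀ hr₀))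
  have hj := hσ.condExpUtil_le hk j
  have hj' := hσ.condExpUtil_le hk' j'
  simp only [condExpUtil] at hj hj'
  simp only [mul_sub, mul_add, Finset.sum_sub_distrib, Finset.sum_add_distrib] at hpos
  linarith

lemma expUtil_purePlay (u : I → (∀ j, A j) → ℝ) (g : ∀ i, A i) (p : I) :
    expUtil u (fun q => purePlay (g q)) p = u p g := by
  have h : ∀ x : ∀ i, A i, ∏ q, purePlay (g q) (x q) = if x = g then 1 else 0 := fun x => by
    simp only [purePlay, Fintype.prod_boole, funext_iff]
  simp [expUtil, h]

lemma isMixedNash_purePlay {u : I → (∀ j, A j) → ℝ} {g : ∀ i, A i}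
    (h : ∀ p (a : A p), u p (update g p a) ≤ u p g) :
    IsMixedNash u (fun q => purePlay (g q)) := by
  refine ⟨⟨fun q a => ?_, fun q => by simp [purePlay]⟩, fun p a => ?_⟩
  · dsimp only [purePlay]; split_ifs <;> norm_num
  · have : update (fun q => purePlay (g q)) p (purePlay a) = fun q => purePlay (update g p a q) :=
      funext fun q => (apply_update (fun _ => purePlay) g p a q).symm
    rw [this, expUtil_purePlay, expUtil_purePlay]
    exact h p a

lemma eq_purePlay_of_support_subset {α : Type} [Fintype α] [DecidableEq α] {τ : α → ℝ}
    (hτ : ∑ b, τ b = 1) {a : α} (h : ∀ b, τ b ≠ 0 → b = a) : τ = purePlay a := by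
  have hb : ∀ b, b ≠ a → τ b = 0 := fun b hb => by_contra fun h' => hb (h b h')
  ext b
  by_cases hba : b = a
  · subst hba
    rw [Finset.sum_eq_single b (fun c _ hc => hb c hc) (by simp)] at hτ
    simp [purePlay, hτ]
  · simp [purePlay, hba, hb b hba]

end MixedStrategies

lemma update_add_single {ι M : Type*} [DecidableEq ι] [AddZeroClass M] (f : ι → M) (i : ι)
    (a b : M) : update f i a + Pi.single i b = update f i (a + b) := by
  ext j
  by_cases hj : j = i
  · subst hj; simp
  · simp [update_of_ne hj, Pi.single_eq_of_ne hj]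

/-- The drop of `x ^ (2 * n)` when a player at distance `x` from its opponent steps towards it. -/
def stepGain (n : ℕ) (x : ℤ) : ℤ := x ^ (2 * n) - (x - 1) ^ (2 * n)

lemma stepGain_eq_of_sign {ε : ℤ} (hε : ε = 1 ∨ ε = -1) (n : ℕ) (c o : ℤ) :
    (c - o) ^ (2 * n) - (c - ε - o) ^ (2 * n) = stepGain n (ε * (c - o)) := by
  rcases hε with rfl | rfl
  · simp only [stepGain, one_mul]; ring_nf
  · rw [stepGain, ← (even_two_mul n).neg_pow (c - o), ← (even_two_mul n).neg_pow (c - -1 - o)]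
    ring_nf

lemma neg_one_le_stepGain (n : ℕ) {x : ℤ} (hx : 0 ≤ x) : -1 ≤ stepGain n x := by
  rcases hx.eq_or_lt with rfl | hx
  · simp only [stepGain, zero_sub, (even_two_mul n).neg_one_pow]
    linarith [pow_nonneg (le_refl (0 : ℤ)) (2 * n)]
  · have : (x - 1) ^ (2 * n) ≤ x ^ (2 * n) := pow_le_pow_left₀ (by omega) (by omega) _
    simp only [stepGain]; omega

/-- `x ^ (m + 1) - (x - 1) ^ (m + 1) ≥ x ^ m ≥ c ^ m` for `1 ≤ c ≤ x`. -/
lemma pow_le_mul_stepGain {n : ℕ} (hn : 1 ≤ n) {c x : ℤ} (hc : 1 ≤ c) (hcx : c ≤ x) :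
    c ^ (2 * n) ≤ c * stepGain n x := by
  obtain ⟨m, hm⟩ : ∃ m, 2 * n = m + 1 := ⟨2 * n - 1, by omega⟩
  have hx1 : (x - 1) ^ m ≤ x ^ m := pow_le_pow_left₀ (by omega) (by omega) m
  have hcx' : c ^ m ≤ x ^ m := pow_le_pow_left₀ (by omega) hcx m
  have hgap : x ^ m ≤ stepGain n x := by
    rw [stepGain, hm, pow_succ, pow_succ]
    nlinarith
  calc c ^ (2 * n) = c * c ^ m := by rw [hm, pow_succ']
    _ ≤ c * stepGain n x := mul_le_mul_of_nonneg_left (hcx'.trans hgap) (by omega)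

lemma lt_stepGain {n : ℕ} (hn : 11 ≤ n) {x : ℤ} (hx : 2 ≤ x) : 400 * 2 ^ n < stepGain n x := by
  have hQ : (2 : ℤ) ^ 11 ≤ 2 ^ n := pow_le_pow_right₀ (by norm_num) hn
  have h := pow_le_mul_stepGain (n := n) (by omega) (by norm_num : (1 : ℤ) ≤ 2) hx
  rw [pow_mul'] at h
  nlinarith

lemma lt_stepGain_add_stepGain {n : ℕ} (hn : 11 ≤ n) {s t : ℤ} (hs : -1 ≤ s) (ht : -1 ≤ t)
    (hst : 3 ≤ s + t) : 800 * 2 ^ n < stepGain n s + stepGain n t := by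
  wlog hle : s ≤ t generalizing s t
  · linarith [this ht hs (by omega) (by omega)]
  have hQ : (2 : ℤ) ^ 11 ≤ 2 ^ n := pow_le_pow_right₀ (by norm_num) hn
  rcases show s = -1 ∨ s = 0 ∨ 1 ≤ s by omega with rfl | rfl | hs1
  · have h := pow_le_mul_stepGain (n := n) (by omega) (by norm_num : (1 : ℤ) ≤ 4) (by omega : 4 ≤ t)
    have hs : stepGain n (-1) = 1 - (2 ^ n) ^ 2 := by
      rw [stepGain, (even_two_mul n).neg_one_pow, show (-1 : ℤ) - 1 = -2 by norm_num,
        (even_two_mul n).neg_pow, pow_mul']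
    rw [show (4 : ℤ) ^ (2 * n) = (2 ^ n) ^ 4 by
      rw [show (4 : ℤ) = 2 ^ 2 by norm_num, ← pow_mul, ← pow_mul]; ring_nf] at h
    have hQ2 : 2048 * 2 ^ n ≤ ((2 : ℤ) ^ n) ^ 2 := by nlinarith
    have hQ4 : 2048 * ((2 : ℤ) ^ n) ^ 2 ≤ (2 ^ n) ^ 4 := by nlinarith
    nlinarith
  · have h := pow_le_mul_stepGain (n := n) (by omega) (by norm_num : (1 : ℤ) ≤ 2) (by omega : 2 ≤ t)
    have hs := neg_one_le_stepGain n (le_refl 0)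
    rw [pow_mul'] at h
    nlinarith
  · have h := pow_le_mul_stepGain (n := n) (by omega) (by norm_num : (1 : ℤ) ≤ 2) (by omega : 2 ≤ t)
    have hs := pow_le_mul_stepGain (n := n) (by omega) (le_refl 1) hs1
    rw [pow_mul'] at h
    simp only [one_pow, one_mul] at hs
    nlinarith

namespace HdImitation

variable {n : ℕ}

abbrev Player (n : ℕ) := Fin (n+1) ⊕ Fin (n+1)

def coord : Player n → Fin (n+1) := Sum.elim id id

def opponent : Player n → Player n := Sum.elim Sum.inr Sum.inl

def teammate (p : Player n) (i : Fin (n+1)) : Player n :=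
  Sum.elim (fun _ => Sum.inl i) (fun _ => Sum.inr i) p

def teamPosition (y : Player n → ℤ) (p : Player n) : Fin (n+1) → ℤ := fun i => y (teammate p i)

def position (x : Player n → Fin 30) : Player n → ℤ := fun q => ((x q : ℕ) : ℤ)

def cost (φ : (Fin (n+1) → ℤ) → ℕ) (p : Player n) (y : Player n → ℤ) : ℤ :=
  ∑ i, (y (Sum.inl i) - y (Sum.inr i)) ^ (2 * n) + 2 * φ (teamPosition y p)

@[simp] lemma coord_opponent (p : Player n) : coord (opponent p) = coord p := by
  rcases p with i | i <;> rfl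

@[simp] lemma opponent_opponent (p : Player n) : opponent (opponent p) = p := by
  rcases p with i | i <;> rfl

@[simp] lemma coord_teammate (p : Player n) (i : Fin (n+1)) : coord (teammate p i) = i := by
  rcases p with j | j <;> rfl

@[simp] lemma teammate_coord (p : Player n) : teammate p (coord p) = p := by
  rcases p with j | j <;> rfl

lemma teammate_eq_self_iff {p : Player n} {i : Fin (n+1)} : teammate p i = p ↔ i = coord p := by
  rcases p with j | j <;> simp [teammate, coord]

lemma hdImitationU_eq_neg_cost (φ : (Fin (n+1) → ℤ) → ℕ) (p : Player n) (x : Player n → Fin 30) :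
    hdImitationU n (fun x => (φ x : ℝ)) p x = -(cost φ p (position x) : ℝ) := by
  have hteam : ∀ q, teamPosition (position x) q = fun i => ((x (teammate q i) : ℕ) : ℤ) :=
    fun _ => rfl
  rcases p with i | i <;> simp only [hdImitationU, cost, hteam] <;> simp [position, teammate] <;>
    ring

lemma position_update (x : Player n → Fin 30) (p : Player n) (a : Fin 30) :
    position (update x p a) = update (position x) p ((a : ℕ) : ℤ) :=
  funext fun q => apply_update (fun _ (b : Fin 30) => ((b : ℕ) : ℤ)) x p a q

lemma teamPosition_update_self (y : Player n → ℤ) (p : Player n) (c : ℤ) :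
    teamPosition (update y p c) p = update (teamPosition y p) (coord p) c := by
  ext i
  by_cases hi : i = coord p
  · subst hi; simp [teamPosition]
  · simp [teamPosition, update_of_ne hi, update_of_ne (mt teammate_eq_self_iff.1 hi)]

lemma sum_update_sub_pow (y : Player n → ℤ) (p : Player n) (c : ℤ) :
    ∑ i, (update y p c (Sum.inl i) - update y p c (Sum.inr i)) ^ (2 * n) =
      (c - y (opponent p)) ^ (2 * n) +
        ∑ i ∈ univ.erase (coord p), (y (Sum.inl i) - y (Sum.inr i)) ^ (2 * n) := by
  rw [← Finset.add_sum_erase _ _ (mem_univ (coord p))]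
  congr 1
  · rcases p with i | i
    · simp [coord, opponent]
    · simp [coord, opponent, ← (even_two_mul n).neg_pow (c - _)]
  · refine Finset.sum_congr rfl fun i hi => ?_
    have hi := Finset.ne_of_mem_erase hi
    rcases p with j | j <;> simp_all [coord]

lemma cost_update_sub_cost_update (φ : (Fin (n+1) → ℤ) → ℕ) (y : Player n → ℤ) (p : Player n)
    (c c' : ℤ) :
    cost φ p (update y p c) - cost φ p (update y p c') =
      (c - y (opponent p)) ^ (2 * n) - (c' - y (opponent p)) ^ (2 * n) +
        2 * ((φ (update (teamPosition y p) (coord p) c) : ℤ) -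
          φ (update (teamPosition y p) (coord p) c')) := by
  simp only [cost, sum_update_sub_pow, teamPosition_update_self]
  ring

lemma inGrid_update_teamPosition {y : Player n → ℤ} (hy : ∀ q, 0 ≤ y q ∧ y q ≤ 29)
    (p : Player n) {c : ℤ} (hc : 0 ≤ c ∧ c ≤ 29) :
    inGrid n (update (teamPosition y p) (coord p) c) := by
  intro i
  by_cases hi : i = coord p
  · subst hi; simpa using hc
  · simpa [update_of_ne hi, teamPosition] using hy _

lemma le_cost_update_sub_cost_update {φ : (Fin (n+1) → ℤ) → ℕ}
    (hφ : ∀ x, inGrid n x → φ x ≤ 200 * 2 ^ n) {y : Player n → ℤ}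
    (hy : ∀ q, 0 ≤ y q ∧ y q ≤ 29) (p : Player n) (c : ℤ) {c' : ℤ}
    (hc' : 0 ≤ c' ∧ c' ≤ 29) :
    (c - y (opponent p)) ^ (2 * n) - (c' - y (opponent p)) ^ (2 * n) - 400 * 2 ^ n ≤
      cost φ p (update y p c) - cost φ p (update y p c') := by
  have h := hφ _ (inGrid_update_teamPosition hy p hc')
  zify at h
  rw [cost_update_sub_cost_update]
  linarith [Int.natCast_nonneg (φ (update (teamPosition y p) (coord p) c))]

noncomputable def supportPositions (σ : Player n → Fin 30 → ℝ) (p : Player n) : Finset ℤ :=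
  (univ.filter fun a => σ p a ≠ 0).image fun a : Fin 30 => ((a : ℕ) : ℤ)

variable {σ : Player n → Fin 30 → ℝ}

lemma mem_supportPositions {p : Player n} {z : ℤ} :
    z ∈ supportPositions σ p ↔ ∃ a, σ p a ≠ 0 ∧ ((a : ℕ) : ℤ) = z := by
  simp [supportPositions]

lemma bounds_of_mem_supportPositions {p : Player n} {z : ℤ} (hz : z ∈ supportPositions σ p) :
    0 ≤ z ∧ z ≤ 29 := by
  obtain ⟨a, -, rfl⟩ := mem_supportPositions.1 hz
  omega

lemma supportPositions_nonempty (hσ : IsMixedProfile σ) (p : Player n) :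
    (supportPositions σ p).Nonempty := by
  obtain ⟨a, -, ha⟩ := Finset.exists_ne_zero_of_sum_ne_zero (hσ.2 p ▸ one_ne_zero)
  exact ⟨_, mem_supportPositions.2 ⟨a, ha, rfl⟩⟩

lemma exists_fin_thirty_eq {z : ℤ} (hz : 0 ≤ z ∧ z ≤ 29) : ∃ a : Fin 30, ((a : ℕ) : ℤ) = z :=
  ⟨⟨z.toNat, by omega⟩, by simp; omega⟩

variable {φ : (Fin (n+1) → ℤ) → ℕ}

lemma exists_support_cost_le (hσ : IsMixedNash (hdImitationU n fun x => (φ x : ℝ)) σ)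
    {p : Player n} {z z' t t' : ℤ} (hz : z ∈ supportPositions σ p)
    (hz' : z' ∈ supportPositions σ p) (ht : 0 ≤ t ∧ t ≤ 29) (ht' : 0 ≤ t' ∧ t' ≤ 29) :
    ∃ y : Player n → ℤ, (∀ q, y q ∈ supportPositions σ q) ∧
      cost φ p (update y p z) + cost φ p (update y p z') ≤
        cost φ p (update y p t) + cost φ p (update y p t') := by
  obtain ⟨k, hk, rfl⟩ := mem_supportPositions.1 hz
  obtain ⟨k', hk', rfl⟩ := mem_supportPositions.1 hz'
  obtain ⟨j, rfl⟩ := exists_fin_thirty_eq ht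
  obtain ⟨j', rfl⟩ := exists_fin_thirty_eq ht'
  obtain ⟨x, hx, hle⟩ := hσ.exists_support_add_le hk hk' j j'
  refine ⟨position x, fun q => mem_supportPositions.2 ⟨x q, hx q, rfl⟩, ?_⟩
  simp only [hdImitationU_eq_neg_cost, position_update] at hle
  rw [← Int.cast_le (R := ℝ)]
  push_cast
  linarith

/-- Otherwise the player could step towards the opponent's support: the distance term would drop
by more than `2 φ` can rise. -/
lemma exists_mem_supportPositions_opponent_near (hn : 11 ≤ n)
    (hφ : ∀ x, inGrid n x → φ x ≤ 200 * 2 ^ n)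
    (hσ : IsMixedNash (hdImitationU n fun x => (φ x : ℝ)) σ) {ε : ℤ} (hε : ε = 1 ∨ ε = -1)
    {p : Player n} {z : ℤ} (hz : z ∈ supportPositions σ p) :
    ∃ o ∈ supportPositions σ (opponent p), ε * (z - o) ≤ 1 := by
  by_contra! hfar
  obtain ⟨o₀, ho₀⟩ := supportPositions_nonempty hσ.1 (opponent p)
  have hz' := bounds_of_mem_supportPositions hz
  have ho₀' := bounds_of_mem_supportPositions ho₀
  have hstep : 0 ≤ z - ε ∧ z - ε ≤ 29 := by
    have := hfar o₀ ho₀; rcases hε with rfl | rfl <;> omega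
  obtain ⟨y, hy, hle⟩ := exists_support_cost_le (φ := φ) hσ hz hz hstep hz'
  have hgain := le_cost_update_sub_cost_update hφ (fun q => bounds_of_mem_supportPositions (hy q))
    p z hstep
  rw [stepGain_eq_of_sign hε] at hgain
  linarith [lt_stepGain hn (hfar _ (hy (opponent p)))]

lemma sub_le_two_of_mem_supportPositions (hn : 11 ≤ n)
    (hφ : ∀ x, inGrid n x → φ x ≤ 200 * 2 ^ n)
    (hσ : IsMixedNash (hdImitationU n fun x => (φ x : ℝ)) σ) {p : Player n} {z z' : ℤ}
    (hz : z ∈ supportPositions σ p) (hz' : z' ∈ supportPositions σ p) : z' - z ≤ 2 := by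
  have hne := supportPositions_nonempty hσ.1 p
  set m := (supportPositions σ p).min' hne
  set M := (supportPositions σ p).max' hne
  suffices M - m ≤ 2 by
    linarith [(supportPositions σ p).min'_le z hz, (supportPositions σ p).le_max' z' hz']
  by_contra! hwide
  have hm := bounds_of_mem_supportPositions (min'_mem _ hne)
  have hM := bounds_of_mem_supportPositions (max'_mem _ hne)
  obtain ⟨y, hy, hle⟩ := exists_support_cost_le (φ := φ) hσ (min'_mem _ hne) (max'_mem _ hne)
    (t := m + 1) (t' := M - 1) (by omega) (by omega)
  set o := y (opponent p)
  have ho := hy (opponent p)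
  obtain ⟨z₁, hz₁, ho₁⟩ := exists_mem_supportPositions_opponent_near hn hφ hσ (Or.inl rfl) ho
  obtain ⟨z₂, hz₂, ho₂⟩ := exists_mem_supportPositions_opponent_near hn hφ hσ (Or.inr rfl) ho
  rw [opponent_opponent] at hz₁ hz₂
  have := (supportPositions σ p).le_max' z₁ hz₁
  have := (supportPositions σ p).min'_le z₂ hz₂
  have hy' := fun q => bounds_of_mem_supportPositions (hy q)
  have hlow := le_cost_update_sub_cost_update hφ hy' p m (c' := m + 1) (by omega)
  have hhigh := le_cost_update_sub_cost_update hφ hy' p M (c' := M - 1) (by omega)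
  have hlow' := stepGain_eq_of_sign (Or.inr rfl) n m o
  have hhigh' := stepGain_eq_of_sign (Or.inl rfl) n M o
  rw [sub_neg_eq_add] at hlow'
  have hgap := lt_stepGain_add_stepGain hn (s := -1 * (m - o)) (t := 1 * (M - o))
    (by omega) (by omega) (by omega)
  linarith

lemma sub_le_three_of_mem_supportPositions_opponent (hn : 11 ≤ n)
    (hφ : ∀ x, inGrid n x → φ x ≤ 200 * 2 ^ n)
    (hσ : IsMixedNash (hdImitationU n fun x => (φ x : ℝ)) σ) {p : Player n} {z z' : ℤ}
    (hz : z ∈ supportPositions σ p) (hz' : z' ∈ supportPositions σ (opponent p)) :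
    z' - z ≤ 3 := by
  obtain ⟨o, ho, hz'o⟩ := exists_mem_supportPositions_opponent_near hn hφ hσ (Or.inl rfl) hz'
  rw [opponent_opponent] at ho
  linarith [sub_le_two_of_mem_supportPositions hn hφ hσ hz ho]

noncomputable def coordSupport (σ : Player n → Fin 30 → ℝ) (i : Fin (n+1)) : Finset ℤ :=
  supportPositions σ (Sum.inl i) ∪ supportPositions σ (Sum.inr i)

lemma mem_coordSupport_of_mem {q : Player n} {z : ℤ} (hz : z ∈ supportPositions σ q) :
    z ∈ coordSupport σ (coord q) := by
  rcases q with i | i <;> simp [coordSupport, coord, hz]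

lemma exists_of_mem_coordSupport {i : Fin (n+1)} {z : ℤ} (hz : z ∈ coordSupport σ i) :
    ∃ q, coord q = i ∧ z ∈ supportPositions σ q := by
  rcases mem_union.1 hz with h | h
  exacts [⟨Sum.inl i, rfl, h⟩, ⟨Sum.inr i, rfl, h⟩]

lemma sub_le_three_of_mem_coordSupport (hn : 11 ≤ n) (hφ : ∀ x, inGrid n x → φ x ≤ 200 * 2 ^ n)
    (hσ : IsMixedNash (hdImitationU n fun x => (φ x : ℝ)) σ) {i : Fin (n+1)} {z z' : ℤ}
    (hz : z ∈ coordSupport σ i) (hz' : z' ∈ coordSupport σ i) : z' - z ≤ 3 := by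
  rcases mem_union.1 hz with h | h <;> rcases mem_union.1 hz' with h' | h'
  · linarith [sub_le_two_of_mem_supportPositions hn hφ hσ h h']
  · exact sub_le_three_of_mem_supportPositions_opponent hn hφ hσ (p := Sum.inl i) h h'
  · exact sub_le_three_of_mem_supportPositions_opponent hn hφ hσ (p := Sum.inr i) h h'
  · linarith [sub_le_two_of_mem_supportPositions hn hφ hσ h h']

lemma cubeMem_update_teamPosition {v w : Fin (n+1) → ℤ}
    (hvw : ∀ q, ∀ z ∈ supportPositions σ q, v (coord q) ≤ z ∧ z ≤ w (coord q))
    {y : Player n → ℤ} (hy : ∀ q, y q ∈ supportPositions σ q) {p : Player n} {z : ℤ}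
    (hz : z ∈ supportPositions σ p) : cubeMem n v w (update (teamPosition y p) (coord p) z) := by
  refine ⟨inGrid_update_teamPosition (fun q => bounds_of_mem_supportPositions (hy q)) p
    (bounds_of_mem_supportPositions hz), fun j => ?_⟩
  by_cases hj : j = coord p
  · subst hj; simpa using hvw p z hz
  · simpa [update_of_ne hj, teamPosition] using hvw _ _ (hy (teammate p j))

/-- The player to move along `ε e_i` sits on the face `v i` if `ε = 1` and on `w i` if `ε = -1`;
the feasibility of the direction leaves room for the step. -/
lemma exists_extreme_supportPositions {v w : Fin (n+1) → ℤ}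
    (hvw : ∀ q, ∀ z ∈ supportPositions σ q, v (coord q) ≤ z ∧ z ≤ w (coord q))
    (hv : ∀ i, ∃ q, coord q = i ∧ v i ∈ supportPositions σ q)
    (hw : ∀ i, ∃ q, coord q = i ∧ w i ∈ supportPositions σ q) {i : Fin (n+1)} {ε : ℤ}
    (hε : ε = 1 ∨ ε = -1) {x₀ : ℤ} (hx₀ : v i ≤ x₀ ∧ x₀ ≤ w i) (hx₀ε : 0 ≤ x₀ + ε ∧ x₀ + ε ≤ 29) :
    ∃ p : Player n, coord p = i ∧ ∃ z ∈ supportPositions σ p,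
      (∀ o ∈ supportPositions σ (opponent p), 0 ≤ -ε * (z - o)) ∧ (0 ≤ z + ε ∧ z + ε ≤ 29) := by
  rcases hε with rfl | rfl
  · obtain ⟨p, hp, hpz⟩ := hv i
    have := bounds_of_mem_supportPositions hpz
    refine ⟨p, hp, v i, hpz, fun o ho => ?_, by omega⟩
    have := (hvw _ o ho).1
    rw [coord_opponent, hp] at this
    linarith
  · obtain ⟨p, hp, hpz⟩ := hw i
    have := bounds_of_mem_supportPositions hpz
    refine ⟨p, hp, w i, hpz, fun o ho => ?_, by omega⟩
    have := (hvw _ o ho).2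
    rw [coord_opponent, hp] at this
    linarith

/-- The box `C(v,w)` spanned by the supports has no dominating direction `d`: the extreme player
would gain by stepping along `d`, since `φ` drops by at least `1` while the distance to the
opponent grows by at most `1`. -/
lemma not_isDominatingDir (hσ : IsMixedNash (hdImitationU n fun x => (φ x : ℝ)) σ)
    {v w : Fin (n+1) → ℤ}
    (hvw : ∀ q, ∀ z ∈ supportPositions σ q, v (coord q) ≤ z ∧ z ≤ w (coord q))
    (hv : ∀ i, ∃ q, coord q = i ∧ v i ∈ supportPositions σ q)
    (hw : ∀ i, ∃ q, coord q = i ∧ w i ∈ supportPositions σ q) (d : Fin (n+1) → ℤ) :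
    ¬ IsDominatingDir n (fun x => (φ x : ℝ)) v w d := by
  rintro ⟨⟨i, hd⟩, ⟨x₀, hx₀, hx₀d⟩, hdec⟩
  obtain ⟨ε, hε, rfl⟩ : ∃ ε : ℤ, (ε = 1 ∨ ε = -1) ∧ d = Pi.single i ε := by
    rcases hd with h | h
    exacts [⟨1, Or.inl rfl, h⟩, ⟨-1, Or.inr rfl, h⟩]
  have hx₀ε := hx₀d i
  simp only [Pi.add_apply, Pi.single_eq_same] at hx₀ε
  obtain ⟨p, rfl, z, hz, hext, hstep⟩ :=
    exists_extreme_supportPositions hvw hv hw hε (hx₀.2 i) hx₀ε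
  obtain ⟨y, hy, hle⟩ := exists_support_cost_le (φ := φ) hσ hz hz hstep
    (bounds_of_mem_supportPositions hz)
  set X := update (teamPosition y p) (coord p) with hX
  have hφ : φ (X (z + ε)) < φ (X z) := by
    have hgrid := inGrid_update_teamPosition (fun q => bounds_of_mem_supportPositions (hy q)) p
      hstep
    rw [← update_add_single] at hgrid
    rw [hX, ← update_add_single]
    exact Nat.cast_lt.1 (hdec _ (cubeMem_update_teamPosition hvw hy hz) hgrid)
  have hdist := stepGain_eq_of_sign (ε := -ε) (by omega) n z (y (opponent p))
  rw [sub_neg_eq_add] at hdist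
  have := neg_one_le_stepGain n (hext _ (hy (opponent p)))
  have := cost_update_sub_cost_update φ y p z (z + ε)
  have : (φ (X (z + ε)) : ℤ) + 1 ≤ φ (X z) := by exact_mod_cast hφ
  linarith

lemma isMinOn_of_isDominatingDir {vstar : Fin (n+1) → ℤ} (hvs : inGrid n vstar)
    (hdom : ∀ v w, IsSmallCube n v w → ¬(v = vstar ∧ w = vstar) →
      ∃ d, IsDominatingDir n (fun x => (φ x : ℝ)) v w d) :
    IsMinOn φ {x | inGrid n x} vstar := by
  have hgrid : ∀ x, inGrid n x ↔ x ∈ Fintype.piFinset fun _ => Finset.Icc (0 : ℤ) 29 := by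
    simp [inGrid, Fintype.mem_piFinset]
  obtain ⟨x₀, hx₀, hmin⟩ := (Fintype.piFinset _).exists_min_image φ ⟨vstar, (hgrid _).1 hvs⟩
  rw [← hgrid] at hx₀
  suffices x₀ = vstar from this ▸ isMinOn_iff.2 fun x hx => hmin x ((hgrid x).1 hx)
  by_contra hne
  obtain ⟨d, -, ⟨x, hx, hxd⟩, hdec⟩ :=
    hdom x₀ x₀ ⟨hx₀, hx₀, fun _ => le_rfl, fun _ => by simp⟩ fun h => hne h.1
  have hlt : φ (x + d) < φ x := Nat.cast_lt.1 (hdec x hx hxd)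
  obtain rfl : x = x₀ := funext fun i => le_antisymm (hx.2 i).2 (hx.2 i).1
  have := hmin _ ((hgrid _).1 hxd)
  exact this.not_gt hlt

lemma isMixedNash_purePlay_of_isMinOn {vstar : Fin (n+1) → ℤ}
    (hmin : IsMinOn φ {x | inGrid n x} vstar) {g : Player n → Fin 30}
    (hg : ∀ q, ((g q : ℕ) : ℤ) = vstar (coord q)) :
    IsMixedNash (hdImitationU n fun x => (φ x : ℝ)) fun q => purePlay (g q) := by
  refine isMixedNash_purePlay fun p a => ?_
  rw [hdImitationU_eq_neg_cost, hdImitationU_eq_neg_cost, neg_le_neg_iff, Int.cast_le,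
    position_update]
  have hpos : position g = fun q => vstar (coord q) := funext hg
  have hteam : teamPosition (position g) p = vstar := by ext i; simp [teamPosition, hpos]
  have hgrid := inGrid_update_teamPosition (y := position g)
    (fun q => ⟨by simp [position], by simp [position]; omega⟩) p (c := (a : ℕ)) (by omega)
  rw [hteam] at hgrid
  have hφ : (φ vstar : ℤ) ≤ φ (update vstar (coord p) (a : ℕ)) := by
    exact_mod_cast isMinOn_iff.1 hmin _ hgrid
  have hdiff := cost_update_sub_cost_update φ (position g) p (a : ℕ) (vstar (coord p))
  have hself : update (position g) p (vstar (coord p)) = position g := by simp [hpos]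
  have ho : position g (opponent p) = vstar (coord p) := by simp [hpos]
  rw [hself, hteam, update_eq_self, ho, sub_self] at hdiff
  have hdist : (0 : ℤ) ^ (2 * n) ≤ ((a : ℕ) - vstar (coord p)) ^ (2 * n) := by
    have := pow_le_pow_left₀ le_rfl (abs_nonneg (((a : ℕ) : ℤ) - vstar (coord p))) (2 * n)
    rwa [(even_two_mul n).pow_abs] at this
  linarith

/-- The supports span a small cube, so by `not_isDominatingDir` it must be `C(v*,v*)`. -/
lemma eq_of_mem_supportPositions (hn : 11 ≤ n) (hφ : ∀ x, inGrid n x → φ x ≤ 200 * 2 ^ n)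
    {vstar : Fin (n+1) → ℤ}
    (hdom : ∀ v w, IsSmallCube n v w → ¬(v = vstar ∧ w = vstar) →
      ∃ d, IsDominatingDir n (fun x => (φ x : ℝ)) v w d)
    (hσ : IsMixedNash (hdImitationU n fun x => (φ x : ℝ)) σ) {p : Player n} {z : ℤ}
    (hz : z ∈ supportPositions σ p) : z = vstar (coord p) := by
  have hne : ∀ i, (coordSupport σ i).Nonempty := fun i =>
    (supportPositions_nonempty hσ.1 (Sum.inl i)).mono subset_union_left
  set v := fun i => (coordSupport σ i).min' (hne i)
  set w := fun i => (coordSupport σ i).max' (hne i)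
  have hvw : ∀ q, ∀ z ∈ supportPositions σ q, v (coord q) ≤ z ∧ z ≤ w (coord q) :=
    fun q z hz =>
      ⟨min'_le _ _ (mem_coordSupport_of_mem hz), le_max' _ _ (mem_coordSupport_of_mem hz)⟩
  have hv : ∀ i, ∃ q, coord q = i ∧ v i ∈ supportPositions σ q := fun i =>
    exists_of_mem_coordSupport (min'_mem _ (hne i))
  have hw : ∀ i, ∃ q, coord q = i ∧ w i ∈ supportPositions σ q := fun i =>
    exists_of_mem_coordSupport (max'_mem _ (hne i))
  have hgrid : ∀ u : Fin (n+1) → ℤ, (∀ i, ∃ q, coord q = i ∧ u i ∈ supportPositions σ q) →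
      inGrid n u := fun u hu i => by
    obtain ⟨q, -, hq⟩ := hu i
    exact bounds_of_mem_supportPositions hq
  have hsmall : IsSmallCube n v w :=
    ⟨hgrid v hv, hgrid w hw, fun i => min'_le_max' _ (hne i), fun i =>
      (sub_le_three_of_mem_coordSupport hn hφ hσ (min'_mem _ (hne i)) (max'_mem _ (hne i))).trans
        (by norm_num)⟩
  obtain ⟨hvstar, hwstar⟩ : v = vstar ∧ w = vstar := by
    by_contra hcube
    obtain ⟨d, hd⟩ := hdom v w hsmall hcube
    exact not_isDominatingDir hσ hvw hv hw d hd
  have := hvw p z hz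
  rw [hvstar, hwstar] at this
  exact le_antisymm this.2 this.1

end HdImitation

/-- for all large enough `n`, if `φ : G_{n+1} → ℕ` is bounded by `200·2^n` and
every small cube except the singleton `C(v*,v*)` has a dominating direction, then the
high-degree imitation game associated with `φ` has a unique mixed Nash equilibrium,
namely the pure profile where everyone plays `v*` (i.e. `a = b = v*`). -/
theorem stmt1 :
    ∃ n₀ : ℕ, ∀ n : ℕ, n₀ ≤ n →
      ∀ vstar : Fin (n+1) → ℤ, inGrid n vstar →
      ∀ φ : (Fin (n+1) → ℤ) → ℕ,
        (∀ x, inGrid n x → φ x ≤ 200 * 2 ^ n) →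
        (∀ v w, IsSmallCube n v w → ¬(v = vstar ∧ w = vstar) →
          ∃ d, IsDominatingDir n (fun x => (φ x : ℝ)) v w d) →
        IsMixedNash (hdImitationU n (fun x => (φ x : ℝ)))
          (fun p (x : Fin 30) =>
            if ((x : ℕ) : ℤ) = vstar (Sum.elim id id p) then (1 : ℝ) else 0) ∧
        ∀ σ : (Fin (n+1) ⊕ Fin (n+1)) → Fin 30 → ℝ,
          IsMixedNash (hdImitationU n (fun x => (φ x : ℝ))) σ →
          σ = fun p (x : Fin 30) =>
            if ((x : ℕ) : ℤ) = vstar (Sum.elim id id p) then (1 : ℝ) else 0 := by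
  refine ⟨11, fun n hn vstar hvs φ hφ hdom => ?_⟩
  choose g hg using fun q : HdImitation.Player n =>
    HdImitation.exists_fin_thirty_eq (hvs (HdImitation.coord q))
  have hprofile : (fun p (x : Fin 30) =>
      if ((x : ℕ) : ℤ) = vstar (Sum.elim id id p) then (1 : ℝ) else 0) =
      fun q => purePlay (g q) := by
    ext q x
    simp only [purePlay, ← Fin.val_inj, ← Nat.cast_inj (R := ℤ), hg q]
    rfl
  rw [hprofile]
  refine ⟨HdImitation.isMixedNash_purePlay_of_isMinOn
    (HdImitation.isMinOn_of_isDominatingDir hvs hdom) hg,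
    fun σ hσ => funext fun p => eq_purePlay_of_support_subset (hσ.1.2 p) fun a ha => ?_⟩
  have := HdImitation.eq_of_mem_supportPositions hn hφ hdom hσ
    (HdImitation.mem_supportPositions.2 ⟨a, ha, rfl⟩)
  rw [← hg] at this
  exact Fin.ext (by exact_mod_cast this)
end

section
/- There exists n₀ ∈ ℕ such that for every n ≥ n₀ the following holds. Let φ : G_{n+1} → ℕ satisfy φ(x) ≤ 200·2^n for all x ∈ G_{n+1}, and let (α,β) = ((α_1,…,α_{n+1}),(β_1,…,β_{n+1})) be any mixed Nash equilibrium of the high-degree imitation game associated with φ. Then there exists a small cube C(v,w) (in particular max_i (w_i − v_i) ≤ 4) such that for every coordinate i, the supports of α_i and β_i are both contained in the segment [v_i, w_i]. -/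
open Finset
set_option linter.unusedSectionVars false
set_option linter.unusedVariables false
set_option maxHeartbeats 1000000

namespace StmtAux

section gen
variable {I : Type} [Fintype I] [DecidableEq I] {A : I → Type}
  [∀ i, Fintype (A i)] [∀ i, DecidableEq (A i)]

noncomputable def Ex (τ : ∀ i, A i → ℝ) (F : (∀ j, A j) → ℝ) : ℝ :=
  ∑ prof : ∀ j, A j, (∏ q, τ q (prof q)) * F prof

lemma Ex_add (τ : ∀ i, A i → ℝ) (F G : (∀ j, A j) → ℝ) :
    Ex τ (fun prof => F prof + G prof) = Ex τ F + Ex τ G := by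
  simp [Ex, mul_add, Finset.sum_add_distrib]

lemma Ex_neg (τ : ∀ i, A i → ℝ) (F : (∀ j, A j) → ℝ) :
    Ex τ (fun prof => -F prof) = -Ex τ F := by
  simp [Ex]

lemma Ex_const_mul (τ : ∀ i, A i → ℝ) (c : ℝ) (F : (∀ j, A j) → ℝ) :
    Ex τ (fun prof => c * F prof) = c * Ex τ F := by
  simp [Ex, Finset.mul_sum]; congr 1; ext prof; ring

lemma Ex_finsum {κ : Type} (s : Finset κ) (τ : ∀ i, A i → ℝ) (F : κ → (∀ j, A j) → ℝ) :
    Ex τ (fun prof => ∑ j ∈ s, F j prof) = ∑ j ∈ s, Ex τ (F j) := by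
  simp only [Ex, Finset.mul_sum]
  rw [Finset.sum_comm]

lemma Ex_sum_weights (τ : ∀ i, A i → ℝ) (h1 : ∀ q, ∑ x, τ q x = 1) :
    ∑ prof : ∀ j, A j, (∏ q, τ q (prof q)) = 1 := by
  have := Finset.prod_univ_sum (fun _ : I => (univ : Finset (A _))) (fun q x => τ q x)
  rw [Fintype.piFinset_univ] at this
  rw [← this]
  simp [h1]

lemma Ex_const (τ : ∀ i, A i → ℝ) (h1 : ∀ q, ∑ x, τ q x = 1) (c : ℝ) :
    Ex τ (fun _ => c) = c := by
  simp only [Ex, ← Finset.sum_mul, Ex_sum_weights τ h1, one_mul]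

lemma Ex_mono (τ : ∀ i, A i → ℝ) (h0 : ∀ q x, 0 ≤ τ q x) {F G : (∀ j, A j) → ℝ}
    (h : ∀ prof, F prof ≤ G prof) : Ex τ F ≤ Ex τ G := by
  apply Finset.sum_le_sum
  intro prof _
  exact mul_le_mul_of_nonneg_left (h prof) (Finset.prod_nonneg fun q _ => h0 q (prof q))

lemma Ex_proj (τ : ∀ i, A i → ℝ) (h1 : ∀ q, ∑ x, τ q x = 1) (q : I) (G : A q → ℝ) :
    Ex τ (fun prof => G (prof q)) = ∑ x, τ q x * G x := by
  classical
  have key : ∀ prof : ∀ j, A j,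
      (∏ r, τ r (prof r)) * G (prof q)
        = ∏ r, (Function.update τ q (fun x => τ q x * G x)) r (prof r) := by
    intro prof
    rw [← Finset.mul_prod_erase univ (fun r => τ r (prof r)) (mem_univ q),
        ← Finset.mul_prod_erase univ
          (fun r => (Function.update τ q (fun x => τ q x * G x)) r (prof r)) (mem_univ q)]
    rw [Function.update_self]
    have : ∀ r ∈ univ.erase q,
        (Function.update τ q (fun x => τ q x * G x)) r (prof r) = τ r (prof r) := by
      intro r hr
      rw [Function.update_of_ne (Finset.ne_of_mem_erase hr)]
    rw [Finset.prod_congr rfl this]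
    ring
  rw [Ex, Finset.sum_congr rfl (fun prof _ => key prof)]
  have := Finset.prod_univ_sum (fun _ : I => (univ : Finset (A _)))
    (fun r x => (Function.update τ q (fun x => τ q x * G x)) r x)
  rw [Fintype.piFinset_univ] at this
  rw [← this]
  rw [← Finset.mul_prod_erase univ
    (fun r => ∑ x, (Function.update τ q (fun x => τ q x * G x)) r x) (mem_univ q)]
  rw [Function.update_self]
  have h2 : ∀ r ∈ univ.erase q,
      (∑ x, (Function.update τ q (fun x => τ q x * G x)) r x) = 1 := by
    intro r hr
    rw [Function.update_of_ne (Finset.ne_of_mem_erase hr)]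
    exact h1 r
  rw [Finset.prod_congr rfl h2]
  simp


lemma Ex_pure_subst (τ : ∀ i, A i → ℝ) (p : I) (a : A p) (F : (∀ j, A j) → ℝ) :
    Ex (Function.update τ p (purePlay a)) F
      = Ex (Function.update τ p (purePlay a)) (fun prof => F (Function.update prof p a)) := by
  apply Finset.sum_congr rfl
  intro prof _
  by_cases h : prof p = a
  · have hup : Function.update prof p a = prof := by
      rw [← h]; exact Function.update_eq_self p prof
    show _ = _ * F (Function.update prof p a)
    rw [hup]
  · have hz : (∏ q, (Function.update τ p (purePlay a)) q (prof q)) = 0 := by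
      apply Finset.prod_eq_zero (mem_univ p)
      rw [Function.update_self]
      simp [purePlay, h]
    rw [hz, zero_mul, zero_mul]

/-- swap-reindexing equivalence -/
noncomputable def swapAt (p : I) (a a' : A p) : (∀ j, A j) ≃ (∀ j, A j) where
  toFun := fun prof => Function.update prof p (Equiv.swap a a' (prof p))
  invFun := fun prof => Function.update prof p (Equiv.swap a a' (prof p))
  left_inv := by
    intro prof
    simp [Function.update_idem, Function.update_self, Equiv.swap_apply_self,
      Function.update_eq_self]
  right_inv := by
    intro prof
    simp [Function.update_idem, Function.update_self, Equiv.swap_apply_self,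
      Function.update_eq_self]

lemma Ex_pure_indep (τ : ∀ i, A i → ℝ) (p : I) (a a' : A p) (F : (∀ j, A j) → ℝ)
    (hF : ∀ prof (y : A p), F (Function.update prof p y) = F prof) :
    Ex (Function.update τ p (purePlay a)) F = Ex (Function.update τ p (purePlay a')) F := by
  unfold Ex
  apply Fintype.sum_equiv (swapAt p a a')
  intro prof
  have hFe : F ((swapAt p a a') prof) = F prof := hF prof _
  rw [hFe]
  congr 1
  rw [← Finset.mul_prod_erase univ (fun q => (Function.update τ p (purePlay a)) q (prof q)) (mem_univ p),
      ← Finset.mul_prod_erase univ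
        (fun q => (Function.update τ p (purePlay a')) q (((swapAt p a a') prof) q)) (mem_univ p)]
  have h1 : ∀ r ∈ univ.erase p,
      (Function.update τ p (purePlay a')) r (((swapAt p a a') prof) r)
        = (Function.update τ p (purePlay a)) r (prof r) := by
    intro r hr
    have hrp := Finset.ne_of_mem_erase hr
    rw [Function.update_of_ne hrp, Function.update_of_ne hrp]
    congr 1
    exact Function.update_of_ne hrp _ _
  rw [Finset.prod_congr rfl h1]
  congr 1
  rw [Function.update_self, Function.update_self]
  show purePlay a (prof p) = purePlay a' (((swapAt p a a') prof) p)
  have : ((swapAt p a a') prof) p = Equiv.swap a a' (prof p) := Function.update_self _ _ _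
  rw [this]
  simp only [purePlay]
  by_cases h : prof p = a
  · subst h
    simp [Equiv.swap_apply_left]
  · have h2 : Equiv.swap a a' (prof p) ≠ a' := by
      intro hc
      apply h
      apply (Equiv.swap a a').injective (a₁ := prof p) (a₂ := a)
      rw [hc, Equiv.swap_apply_left]
    simp [h, h2]

lemma Ex_decompose (τ : ∀ i, A i → ℝ) (p : I) (F : (∀ j, A j) → ℝ) :
    Ex τ F = ∑ x : A p, τ p x * Ex (Function.update τ p (purePlay x)) F := by
  unfold Ex
  simp only [Finset.mul_sum]
  rw [Finset.sum_comm]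
  apply Finset.sum_congr rfl
  intro prof _
  have key : ∀ x : A p,
      τ p x * ((∏ q, (Function.update τ p (purePlay x)) q (prof q)) * F prof)
        = (if x = prof p then (∏ q, τ q (prof q)) * F prof else 0) := by
    intro x
    rw [← Finset.mul_prod_erase univ (fun q => (Function.update τ p (purePlay x)) q (prof q)) (mem_univ p)]
    have h1 : ∀ r ∈ univ.erase p,
        (Function.update τ p (purePlay x)) r (prof r) = τ r (prof r) := by
      intro r hr
      rw [Function.update_of_ne (Finset.ne_of_mem_erase hr)]
    rw [Finset.prod_congr rfl h1, Function.update_self]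
    by_cases h : x = prof p
    · subst h
      simp only [purePlay, if_pos rfl]
      rw [← Finset.mul_prod_erase univ (fun q => τ q (prof q)) (mem_univ p)]
      simp
      ring
    · have : purePlay x (prof p) = 0 := by
        simp only [purePlay, ite_eq_right_iff]
        intro hc; exact absurd hc.symm h
      rw [this]
      simp [h]
  rw [Finset.sum_congr rfl (fun x _ => key x)]
  rw [Finset.sum_ite_eq' univ (prof p) (fun _ => (∏ q, τ q (prof q)) * F prof)]
  simp


lemma expUtil_eq_Ex (u : I → ((∀ j, A j) → ℝ)) (σ : ∀ i, A i → ℝ) (p : I) :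
    expUtil u σ p = Ex σ (u p) := rfl

lemma supp_best (u : I → ((∀ j, A j) → ℝ)) (σ : ∀ i, A i → ℝ)
    (hN : IsMixedNash u σ) (p : I) (a : A p) (ha : σ p a ≠ 0) (a' : A p) :
    Ex (Function.update σ p (purePlay a)) (u p) ≥ Ex (Function.update σ p (purePlay a')) (u p) := by
  set U : A p → ℝ := fun x => Ex (Function.update σ p (purePlay x)) (u p) with hU
  have hne : (univ : Finset (A p)).Nonempty := ⟨a, mem_univ a⟩
  obtain ⟨as, _, has⟩ := Finset.exists_max_image univ U hne
  have hS : Ex σ (u p) = ∑ x, σ p x * U x := Ex_decompose σ p (u p)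
  have hge : Ex σ (u p) ≥ U as := hN.2 p as
  have hle : ∑ x, σ p x * U x ≤ ∑ x, σ p x * U as := by
    apply Finset.sum_le_sum
    intro x _
    exact mul_le_mul_of_nonneg_left (has x (mem_univ x)) (hN.1.1 p x)
  have hsum1 : ∑ x, σ p x * U as = U as := by
    rw [← Finset.sum_mul, hN.1.2 p, one_mul]
  have hzero : ∑ x, σ p x * (U as - U x) = 0 := by
    have h1 : ∑ x, σ p x * (U as - U x) = (∑ x, σ p x * U as) - ∑ x, σ p x * U x := by
      rw [← Finset.sum_sub_distrib]
      apply Finset.sum_congr rfl; intro x _; ring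
    have h2 : Ex σ (u p) = U as := le_antisymm (by rw [hS]; linarith) hge
    rw [h1, hsum1, ← h2, hS]
    ring
  have hterm : σ p a * (U as - U a) = 0 := by
    have := (Finset.sum_eq_zero_iff_of_nonneg ?_).1 hzero a (mem_univ a)
    · exact this
    · intro x _
      have := has x (mem_univ x)
      have := hN.1.1 p x
      nlinarith
  have hUa : U a = U as := by
    rcases mul_eq_zero.1 hterm with h | h
    · exact absurd h ha
    · linarith
  calc U a = U as := hUa
    _ ≥ U a' := has a' (mem_univ a')

end gen

/-- the one-coordinate expected matching cost -/
noncomputable def DD (n : ℕ) (γ : Fin 30 → ℝ) (y : Fin 30) : ℝ :=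
  ∑ x : Fin 30, γ x * (((y : ℕ) : ℝ) - ((x : ℕ) : ℝ)) ^ (2 * n)

section game
variable (n : ℕ) (φ : (Fin (n+1) → ℤ) → ℕ)
  (σ : (Fin (n+1) ⊕ Fin (n+1)) → Fin 30 → ℝ)

lemma update_prob (hσ : IsMixedProfile σ) (p : Fin (n+1) ⊕ Fin (n+1)) (y : Fin 30) :
    ∀ q, ∑ x, (Function.update σ p (purePlay y)) q x = 1 := by
  intro q
  by_cases h : q = p
  · subst h
    rw [Function.update_self]
    simp [purePlay]
  · rw [Function.update_of_ne h]
    exact hσ.2 q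

lemma update_nonneg (hσ : IsMixedProfile σ) (p : Fin (n+1) ⊕ Fin (n+1)) (y : Fin 30) :
    ∀ q x, 0 ≤ (Function.update σ p (purePlay y)) q x := by
  intro q x
  by_cases h : q = p
  · subst h
    rw [Function.update_self]
    unfold purePlay
    split <;> norm_num
  · rw [Function.update_of_ne h]
    exact hσ.1 q x

lemma nash_ineq (hφ : ∀ x, inGrid n x → φ x ≤ 200 * 2 ^ n)
    (hN : IsMixedNash (hdImitationU n (fun x => (φ x : ℝ))) σ) (i : Fin (n+1)) :
    (∀ a a' : Fin 30, σ (Sum.inl i) a ≠ 0 →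
      DD n (σ (Sum.inr i)) a ≤ DD n (σ (Sum.inr i)) a' + 400 * 2 ^ n) ∧
    (∀ b b' : Fin 30, σ (Sum.inr i) b ≠ 0 →
      DD n (σ (Sum.inl i)) b ≤ DD n (σ (Sum.inl i)) b' + 400 * 2 ^ n) := by
  have hσ := hN.1
  set u := hdImitationU n (fun x => (φ x : ℝ)) with hu
  set Fj : Fin (n+1) → ((Fin (n+1) ⊕ Fin (n+1)) → Fin 30) → ℝ :=
    fun j prof => (((prof (Sum.inl j) : ℕ) : ℝ) - ((prof (Sum.inr j) : ℕ) : ℝ)) ^ (2 * n) with hFj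
  set φA : ((Fin (n+1) ⊕ Fin (n+1)) → Fin 30) → ℝ :=
    fun prof => ((φ (fun j => ((prof (Sum.inl j) : ℕ) : ℤ)) : ℕ) : ℝ) with hφA
  set φB : ((Fin (n+1) ⊕ Fin (n+1)) → Fin 30) → ℝ :=
    fun prof => ((φ (fun j => ((prof (Sum.inr j) : ℕ) : ℤ)) : ℕ) : ℝ) with hφB
  -- bounds on the φ-terms
  have hφbound : ∀ (τ : (Fin (n+1) ⊕ Fin (n+1)) → Fin 30 → ℝ)
      (h0 : ∀ q x, 0 ≤ τ q x) (h1 : ∀ q, ∑ x, τ q x = 1) (G : _ → ℝ)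
      (hG : ∀ prof, 0 ≤ G prof ∧ G prof ≤ 400 * 2 ^ n / 2),
      0 ≤ Ex τ G ∧ Ex τ G ≤ 400 * 2 ^ n / 2 := by
    intro τ h0 h1 G hG
    constructor
    · have := Ex_mono τ h0 (F := fun _ => (0:ℝ)) (G := G) (fun prof => (hG prof).1)
      rwa [Ex_const τ h1 0] at this
    · have := Ex_mono τ h0 (F := G) (G := fun _ => 400 * 2 ^ n / 2) (fun prof => (hG prof).2)
      rwa [Ex_const τ h1 _] at this
  have hφA_pt : ∀ prof, 0 ≤ φA prof ∧ φA prof ≤ 400 * 2 ^ n / 2 := by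
    intro prof
    constructor
    · positivity
    · have hg : inGrid n (fun j => ((prof (Sum.inl j) : ℕ) : ℤ)) := by
        intro j
        constructor
        · positivity
        · show ((prof (Sum.inl j) : ℕ) : ℤ) ≤ 29
          exact_mod_cast Nat.le_of_lt_succ (prof (Sum.inl j)).isLt
      have := hφ _ hg
      have : ((φ (fun j => ((prof (Sum.inl j) : ℕ) : ℤ)) : ℕ) : ℝ) ≤ ((200 * 2 ^ n : ℕ) : ℝ) :=
        Nat.cast_le.mpr this
      calc φA prof ≤ ((200 * 2 ^ n : ℕ) : ℝ) := this
        _ = 400 * 2 ^ n / 2 := by push_cast; ring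
  have hφB_pt : ∀ prof, 0 ≤ φB prof ∧ φB prof ≤ 400 * 2 ^ n / 2 := by
    intro prof
    constructor
    · positivity
    · have hg : inGrid n (fun j => ((prof (Sum.inr j) : ℕ) : ℤ)) := by
        intro j
        constructor
        · positivity
        · show ((prof (Sum.inr j) : ℕ) : ℤ) ≤ 29
          exact_mod_cast Nat.le_of_lt_succ (prof (Sum.inr j)).isLt
      have := hφ _ hg
      have : ((φ (fun j => ((prof (Sum.inr j) : ℕ) : ℤ)) : ℕ) : ℝ) ≤ ((200 * 2 ^ n : ℕ) : ℝ) :=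
        Nat.cast_le.mpr this
      calc φB prof ≤ ((200 * 2 ^ n : ℕ) : ℝ) := this
        _ = 400 * 2 ^ n / 2 := by push_cast; ring
  constructor
  · -- player A_i
    intro a a' ha
    set p : Fin (n+1) ⊕ Fin (n+1) := Sum.inl i with hp
    set τ : Fin 30 → ((Fin (n+1) ⊕ Fin (n+1)) → Fin 30 → ℝ) :=
      fun y => Function.update σ p (purePlay y) with hτ
    have hBR : Ex (τ a) (u p) ≥ Ex (τ a') (u p) := supp_best u σ hN p a ha a'
    -- decomposition
    have hdec : ∀ y : Fin 30, Ex (τ y) (u p)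
        = -(DD n (σ (Sum.inr i)) y) - (∑ j ∈ univ.erase i, Ex (τ y) (Fj j))
          - 2 * Ex (τ y) φA := by
      intro y
      have huf : u p = fun prof => -(∑ j, Fj j prof) + (-2) * φA prof := by
        funext prof
        simp only [hu, hdImitationU, hp, Sum.elim_inl, hFj, hφA]
        ring
      rw [huf, Ex_add, Ex_neg, Ex_const_mul, Ex_finsum]
      have hsplit : ∑ j : Fin (n+1), Ex (τ y) (Fj j)
          = Ex (τ y) (Fj i) + ∑ j ∈ univ.erase i, Ex (τ y) (Fj j) :=
        (Finset.add_sum_erase univ (fun j => Ex (τ y) (Fj j)) (mem_univ i)).symm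
      have hFi : Ex (τ y) (Fj i) = DD n (σ (Sum.inr i)) y := by
        rw [hτ, Ex_pure_subst]
        have hfun : (fun prof => Fj i (Function.update prof p y))
            = fun prof : (Fin (n+1) ⊕ Fin (n+1)) → Fin 30 =>
                (fun x : Fin 30 => (((y : ℕ) : ℝ) - ((x : ℕ) : ℝ)) ^ (2 * n)) (prof (Sum.inr i)) := by
          funext prof
          simp only [hFj, hp]
          rw [Function.update_self, Function.update_of_ne (by simp)]
        rw [hfun, Ex_proj (Function.update σ p (purePlay y)) (update_prob n σ hσ p y) (Sum.inr i)
          (fun x : Fin 30 => (((y : ℕ) : ℝ) - ((x : ℕ) : ℝ)) ^ (2 * n))]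
        have : (Function.update σ p (purePlay y)) (Sum.inr i) = σ (Sum.inr i) :=
          Function.update_of_ne (by simp [hp]) _ _
        rw [this, DD]
      rw [hsplit, hFi]
      ring
    have hRest : ∑ j ∈ univ.erase i, Ex (τ a) (Fj j) = ∑ j ∈ univ.erase i, Ex (τ a') (Fj j) := by
      apply Finset.sum_congr rfl
      intro j hj
      apply Ex_pure_indep
      intro prof z
      simp only [hFj]
      rw [Function.update_of_ne (by simp [Finset.ne_of_mem_erase hj, hp]),
          Function.update_of_ne (by simp [hp])]
    have hKa := hφbound (τ a) (update_nonneg n σ hσ p a) (update_prob n σ hσ p a) φA hφA_pt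
    have hKa' := hφbound (τ a') (update_nonneg n σ hσ p a') (update_prob n σ hσ p a') φA hφA_pt
    have e1 := hdec a
    have e2 := hdec a'
    rw [e1, e2, hRest] at hBR
    linarith [hKa.1, hKa.2, hKa'.1, hKa'.2]
  · -- player B_i
    intro b b' hb
    set p : Fin (n+1) ⊕ Fin (n+1) := Sum.inr i with hp
    set τ : Fin 30 → ((Fin (n+1) ⊕ Fin (n+1)) → Fin 30 → ℝ) :=
      fun y => Function.update σ p (purePlay y) with hτ
    have hBR : Ex (τ b) (u p) ≥ Ex (τ b') (u p) := supp_best u σ hN p b hb b'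
    have hdec : ∀ y : Fin 30, Ex (τ y) (u p)
        = -(DD n (σ (Sum.inl i)) y) - (∑ j ∈ univ.erase i, Ex (τ y) (Fj j))
          - 2 * Ex (τ y) φB := by
      intro y
      have huf : u p = fun prof => -(∑ j, Fj j prof) + (-2) * φB prof := by
        funext prof
        simp only [hu, hdImitationU, hp, Sum.elim_inr, hFj, hφB]
        ring
      rw [huf, Ex_add, Ex_neg, Ex_const_mul, Ex_finsum]
      have hsplit : ∑ j : Fin (n+1), Ex (τ y) (Fj j)
          = Ex (τ y) (Fj i) + ∑ j ∈ univ.erase i, Ex (τ y) (Fj j) :=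
        (Finset.add_sum_erase univ (fun j => Ex (τ y) (Fj j)) (mem_univ i)).symm
      have hFi : Ex (τ y) (Fj i) = DD n (σ (Sum.inl i)) y := by
        rw [hτ, Ex_pure_subst]
        have hfun : (fun prof => Fj i (Function.update prof p y))
            = fun prof : (Fin (n+1) ⊕ Fin (n+1)) → Fin 30 =>
                (fun x : Fin 30 => (((y : ℕ) : ℝ) - ((x : ℕ) : ℝ)) ^ (2 * n)) (prof (Sum.inl i)) := by
          funext prof
          simp only [hFj, hp]
          rw [Function.update_self, Function.update_of_ne (by simp)]
          rw [← neg_sub]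
          exact (Even.neg_pow (even_two_mul n) _)
        rw [hfun, Ex_proj (Function.update σ p (purePlay y)) (update_prob n σ hσ p y) (Sum.inl i)
          (fun x : Fin 30 => (((y : ℕ) : ℝ) - ((x : ℕ) : ℝ)) ^ (2 * n))]
        have : (Function.update σ p (purePlay y)) (Sum.inl i) = σ (Sum.inl i) :=
          Function.update_of_ne (by simp [hp]) _ _
        rw [this, DD]
      rw [hsplit, hFi]
      ring
    have hRest : ∑ j ∈ univ.erase i, Ex (τ b) (Fj j) = ∑ j ∈ univ.erase i, Ex (τ b') (Fj j) := by
      apply Finset.sum_congr rfl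
      intro j hj
      apply Ex_pure_indep
      intro prof z
      simp only [hFj]
      rw [Function.update_of_ne (by simp [hp]),
          Function.update_of_ne (by simp [Finset.ne_of_mem_erase hj, hp])]
    have hKb := hφbound (τ b) (update_nonneg n σ hσ p b) (update_prob n σ hσ p b) φB hφB_pt
    have hKb' := hφbound (τ b') (update_nonneg n σ hσ p b') (update_prob n σ hσ p b') φB hφB_pt
    have e1 := hdec b
    have e2 := hdec b'
    rw [e1, e2, hRest] at hBR
    linarith [hKb.1, hKb.2, hKb'.1, hKb'.2]
end game

def Far (y x : Fin 30) : Prop := (x:ℕ) + 2 ≤ (y:ℕ) ∨ (y:ℕ) + 2 ≤ (x:ℕ)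

instance : ∀ y x : Fin 30, Decidable (Far y x) := fun y x => by unfold Far; infer_instance

lemma evpow_nonneg (n : ℕ) (z : ℝ) : 0 ≤ z ^ (2 * n) := by
  rw [pow_mul]; positivity

lemma DD_nonneg (n : ℕ) (γ : Fin 30 → ℝ) (hγ0 : ∀ x, 0 ≤ γ x) (y : Fin 30) :
    0 ≤ DD n γ y := by
  apply Finset.sum_nonneg
  intro x _
  exact mul_nonneg (hγ0 x) (evpow_nonneg n _)

lemma far_mass (n : ℕ) (γ : Fin 30 → ℝ) (hγ0 : ∀ x, 0 ≤ γ x) (y : Fin 30) (M : ℝ)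
    (hD : DD n γ y ≤ M) :
    (∑ x ∈ univ.filter (Far y), γ x) * 4 ^ n ≤ M := by
  have key : ∀ x ∈ univ.filter (Far y), γ x * 4 ^ n
      ≤ γ x * (((y : ℕ) : ℝ) - ((x : ℕ) : ℝ)) ^ (2 * n) := by
    intro x hx
    have hfar : Far y x := (Finset.mem_filter.1 hx).2
    have h4 : (4:ℝ) ≤ (((y : ℕ) : ℝ) - ((x : ℕ) : ℝ)) ^ 2 := by
      rcases hfar with h | h
      · have : ((x:ℕ):ℝ) + 2 ≤ ((y:ℕ):ℝ) := by exact_mod_cast h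
        nlinarith
      · have : ((y:ℕ):ℝ) + 2 ≤ ((x:ℕ):ℝ) := by exact_mod_cast h
        nlinarith
    have : (4:ℝ) ^ n ≤ ((((y : ℕ) : ℝ) - ((x : ℕ) : ℝ)) ^ 2) ^ n :=
      pow_le_pow_left₀ (by norm_num) h4 n
    rw [← pow_mul] at this
    exact mul_le_mul_of_nonneg_left this (hγ0 x)
  calc (∑ x ∈ univ.filter (Far y), γ x) * 4 ^ n
      = ∑ x ∈ univ.filter (Far y), γ x * 4 ^ n := by rw [Finset.sum_mul]
    _ ≤ ∑ x ∈ univ.filter (Far y), γ x * (((y : ℕ) : ℝ) - ((x : ℕ) : ℝ)) ^ (2 * n) :=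
        Finset.sum_le_sum key
    _ ≤ DD n γ y := by
        apply Finset.sum_le_sum_of_subset_of_nonneg (Finset.filter_subset _ _)
        intro x _ _
        exact mul_nonneg (hγ0 x) (evpow_nonneg n _)
    _ ≤ M := hD

lemma near_val (n : ℕ) (γ : Fin 30 → ℝ) (hγ0 : ∀ x, 0 ≤ γ x) (hγ1 : ∑ x, γ x = 1)
    (y : Fin 30) (h : ∀ x, γ x ≠ 0 → (x:ℕ) ≤ (y:ℕ) + 1 ∧ (y:ℕ) ≤ (x:ℕ) + 1) :
    DD n γ y ≤ 1 := by
  have key : ∀ x ∈ (univ : Finset (Fin 30)),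
      γ x * (((y : ℕ) : ℝ) - ((x : ℕ) : ℝ)) ^ (2 * n) ≤ γ x := by
    intro x _
    by_cases hx : γ x = 0
    · rw [hx]; simp
    · obtain ⟨h1, h2⟩ := h x hx
      have h1' : ((x:ℕ):ℝ) ≤ ((y:ℕ):ℝ) + 1 := by exact_mod_cast h1
      have h2' : ((y:ℕ):ℝ) ≤ ((x:ℕ):ℝ) + 1 := by exact_mod_cast h2
      have hsq : (((y : ℕ) : ℝ) - ((x : ℕ) : ℝ)) ^ 2 ≤ 1 := by nlinarith
      have : ((((y : ℕ) : ℝ) - ((x : ℕ) : ℝ)) ^ 2) ^ n ≤ 1 := pow_le_one₀ (sq_nonneg _) hsq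
      rw [← pow_mul] at this
      nth_rewrite 2 [← mul_one (γ x)]
      exact mul_le_mul_of_nonneg_left this (hγ0 x)
  calc DD n γ y ≤ ∑ x, γ x := Finset.sum_le_sum key
    _ = 1 := hγ1

lemma exists_nonzero_near (γ : Fin 30 → ℝ) (hγ0 : ∀ x, 0 ≤ γ x) (hγ1 : ∑ x, γ x = 1)
    (b : Fin 30) (hfar : ∑ x ∈ univ.filter (Far b), γ x < 1) :
    ∃ x : Fin 30, γ x ≠ 0 ∧ ¬ Far b x := by
  by_contra hc
  push_neg at hc
  have : ∑ x ∈ univ.filter (Far b), γ x = 1 := by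
    rw [← hγ1]
    apply Finset.sum_subset (Finset.filter_subset _ _)
    intro x _ hx
    by_contra hne
    exact hx (Finset.mem_filter.2 ⟨mem_univ x, hc x hne⟩)
  linarith


lemma core (n : ℕ) (hn : 15 ≤ n) (p q : Fin 30 → ℝ)
    (hp0 : ∀ x, 0 ≤ p x) (hq0 : ∀ x, 0 ≤ q x)
    (hp1 : ∑ x, p x = 1) (hq1 : ∑ x, q x = 1)
    (Hp : ∀ a a' : Fin 30, p a ≠ 0 → DD n q a ≤ DD n q a' + 400 * 2 ^ n)
    (Hq : ∀ b b' : Fin 30, q b ≠ 0 → DD n p b ≤ DD n p b' + 400 * 2 ^ n)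
    (amax : Fin 30) (hpmax : p amax ≠ 0)
    (hmaxp : ∀ x, p x ≠ 0 → (x:ℕ) ≤ (amax:ℕ)) (hmaxq : ∀ x, q x ≠ 0 → (x:ℕ) ≤ (amax:ℕ)) :
    ∃ v w : ℤ, 0 ≤ v ∧ w ≤ 29 ∧ v ≤ w ∧ w - v ≤ 4 ∧
      ∀ x : Fin 30, (p x ≠ 0 ∨ q x ≠ 0) → v ≤ ((x:ℕ):ℤ) ∧ ((x:ℕ):ℤ) ≤ w := by
  set ε : ℝ := 400 * 2 ^ n with hε
  have hε1 : (1:ℝ) ≤ ε := by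
    have : (1:ℝ) ≤ 2 ^ n := one_le_pow₀ (by norm_num)
    nlinarith
  have hεpos : (0:ℝ) < ε := by linarith
  have h4n : 64 * ε ≤ 4 ^ n := by
    have h1 : (32768:ℝ) ≤ 2 ^ n := by
      calc (32768:ℝ) = 2 ^ 15 := by norm_num
        _ ≤ 2 ^ n := pow_le_pow_right₀ (by norm_num) hn
    have h2 : (4:ℝ) ^ n = 2 ^ n * 2 ^ n := by
      rw [← mul_pow]; norm_num
    rw [h2, hε]
    nlinarith [pow_pos (show (0:ℝ) < 2 by norm_num) n]
  by_cases hz : (amax : ℕ) = 0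
  · refine ⟨0, 0, le_refl _, by norm_num, le_refl _, by norm_num, ?_⟩
    intro x hx
    have hx0 : (x:ℕ) = 0 := by
      rcases hx with h | h
      · have := hmaxp x h; omega
      · have := hmaxq x h; omega
    rw [hx0]; norm_num
  · -- amax ≥ 1
    have hz1 : 1 ≤ (amax:ℕ) := by omega
    have hamax29 : (amax:ℕ) ≤ 29 := by omega
    set a1 : Fin 30 := ⟨(amax:ℕ) - 1, by omega⟩ with ha1
    -- Step: DD n q amax ≤ 30 ε
    have hDDamax : DD n q amax ≤ 30 * ε := by
      have h1 : DD n q amax ≤ DD n q a1 + ε := Hp amax a1 hpmax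
      have h2 : DD n q a1 ≤ (784/841 : ℝ) ^ n * DD n q amax + 1 := by
        have key : ∀ x ∈ (univ : Finset (Fin 30)),
            q x * (((a1 : ℕ) : ℝ) - ((x : ℕ) : ℝ)) ^ (2 * n)
              ≤ (784/841 : ℝ) ^ n * (q x * (((amax : ℕ) : ℝ) - ((x : ℕ) : ℝ)) ^ (2 * n))
                + (if x = amax then q x else 0) := by
          intro x _
          have ha1v : ((a1:ℕ):ℝ) = ((amax:ℕ):ℝ) - 1 := by
            show (((amax:ℕ) - 1 : ℕ) : ℝ) = _
            push_cast [Nat.cast_sub hz1]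
            ring
          by_cases hqx : q x = 0
          · rw [hqx]
            simp only [zero_mul, mul_zero, zero_add]
            split <;> simp [le_refl]
          · have hxle : (x:ℕ) ≤ (amax:ℕ) := hmaxq x hqx
            by_cases hxa : x = amax
            · subst hxa
              rw [ha1v]
              have : (((x:ℕ):ℝ) - 1 - ((x:ℕ):ℝ)) ^ (2*n) = 1 := by
                have : (((x:ℕ):ℝ) - 1 - ((x:ℕ):ℝ)) = -1 := by ring
                rw [this, pow_mul]
                norm_num
              rw [this, mul_one, if_pos rfl]
              have h0 : (0:ℝ) ≤ (784/841 : ℝ) ^ n * (q x * (((x:ℕ):ℝ) - ((x:ℕ):ℝ)) ^ (2*n)) := by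
                apply mul_nonneg (by positivity)
                exact mul_nonneg (hq0 x) (evpow_nonneg n _)
              linarith
            · have hxlt : (x:ℕ) < (amax:ℕ) := by
                have : (x:ℕ) ≠ (amax:ℕ) := fun hc => hxa (Fin.ext hc)
                omega
              have hk1 : (1:ℝ) ≤ ((amax:ℕ):ℝ) - ((x:ℕ):ℝ) := by
                have : (x:ℕ) + 1 ≤ (amax:ℕ) := hxlt
                have := (Nat.cast_le (α := ℝ)).2 this
                push_cast at this
                linarith
              have hk29 : ((amax:ℕ):ℝ) - ((x:ℕ):ℝ) ≤ 29 := by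
                have hx0 : (0:ℝ) ≤ ((x:ℕ):ℝ) := by positivity
                have : ((amax:ℕ):ℝ) ≤ 29 := by exact_mod_cast hamax29
                linarith
              have hsq : (((a1:ℕ):ℝ) - ((x:ℕ):ℝ)) ^ 2
                  ≤ (784/841 : ℝ) * ((((amax:ℕ):ℝ) - ((x:ℕ):ℝ))) ^ 2 := by
                rw [ha1v]
                nlinarith [mul_nonneg (by linarith : (0:ℝ) ≤ ((amax:ℕ):ℝ) - ((x:ℕ):ℝ) - 1)
                    (by linarith : (0:ℝ) ≤ 29 - (((amax:ℕ):ℝ) - ((x:ℕ):ℝ))),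
                  hk1, hk29]
              have hpow : (((a1:ℕ):ℝ) - ((x:ℕ):ℝ)) ^ (2*n)
                  ≤ (784/841 : ℝ) ^ n * ((((amax:ℕ):ℝ) - ((x:ℕ):ℝ))) ^ (2*n) := by
                rw [pow_mul, pow_mul, ← mul_pow]
                exact pow_le_pow_left₀ (sq_nonneg _) hsq n
              have := mul_le_mul_of_nonneg_left hpow (hp0 x |>.trans (le_refl _) |> fun _ => hq0 x) 
              have h3 : q x * (((a1:ℕ):ℝ) - ((x:ℕ):ℝ)) ^ (2*n)
                  ≤ q x * ((784/841 : ℝ) ^ n * ((((amax:ℕ):ℝ) - ((x:ℕ):ℝ))) ^ (2*n)) :=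
                mul_le_mul_of_nonneg_left hpow (hq0 x)
              rw [if_neg hxa]
              nlinarith [hq0 x]
        calc DD n q a1 ≤ ∑ x : Fin 30,
              ((784/841 : ℝ) ^ n * (q x * (((amax : ℕ) : ℝ) - ((x : ℕ) : ℝ)) ^ (2 * n))
                + (if x = amax then q x else 0)) := Finset.sum_le_sum key
          _ = (784/841 : ℝ) ^ n * DD n q amax + q amax := by
              rw [Finset.sum_add_distrib, ← Finset.mul_sum]
              congr 1
              rw [Finset.sum_ite_eq' univ amax (fun _ => q _)]
              simp
          _ ≤ (784/841 : ℝ) ^ n * DD n q amax + 1 := by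
              have : q amax ≤ 1 := by
                rw [← hq1]
                exact Finset.single_le_sum (fun x _ => hq0 x) (mem_univ amax)
              linarith
      have hDD0 : 0 ≤ DD n q amax := DD_nonneg n q hq0 amax
      have hpowle : ((784:ℝ)/841) ^ n ≤ 784/841 := by
        calc ((784:ℝ)/841) ^ n ≤ (784/841 : ℝ) ^ 1 :=
          pow_le_pow_of_le_one (by norm_num) (by norm_num) (by omega)
        _ = 784/841 := pow_one _
      have : (784/841 : ℝ) ^ n * DD n q amax ≤ (784/841 : ℝ) * DD n q amax :=
        mul_le_mul_of_nonneg_right hpowle hDD0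
      nlinarith
    -- Step: all support of p has small DD against q
    have hsupp_p : ∀ a, p a ≠ 0 → DD n q a ≤ 31 * ε := by
      intro a ha
      have := Hp a amax ha
      linarith
    -- concentration: q-mass far from any support point of p is < 1/2
    have hqfar : ∀ a, p a ≠ 0 → ∑ x ∈ univ.filter (Far a), q x ≤ 31/64 := by
      intro a ha
      have h1 := far_mass n q hq0 a (31 * ε) (hsupp_p a ha)
      have h2 : (0:ℝ) ≤ ∑ x ∈ univ.filter (Far a), q x :=
        Finset.sum_nonneg (fun x _ => hq0 x)
      nlinarith
    -- diameter of support of p is ≤ 2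
    have hdiam : ∀ a a', p a ≠ 0 → p a' ≠ 0 →
        ((a:ℕ) ≤ (a':ℕ) + 2 ∧ (a':ℕ) ≤ (a:ℕ) + 2) := by
      intro a a' ha ha'
      by_contra hc
      have hcover : (univ : Finset (Fin 30)) = univ.filter (Far a) ∪ univ.filter (Far a') := by
        ext x
        simp only [mem_univ, true_iff, Finset.mem_union, Finset.mem_filter, true_and]
        unfold Far
        omega
      have h1 : (1:ℝ) = ∑ x ∈ univ.filter (Far a) ∪ univ.filter (Far a'), q x := by
        rw [← hcover, hq1]
      have h2 := Finset.sum_union_inter (s₁ := univ.filter (Far a)) (s₂ := univ.filter (Far a'))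
        (f := q)
      have h3 : (0:ℝ) ≤ ∑ x ∈ univ.filter (Far a) ∩ univ.filter (Far a'), q x :=
        Finset.sum_nonneg (fun x _ => hq0 x)
      have h4 := hqfar a ha
      have h5 := hqfar a' ha'
      linarith
    -- minimum of support of p
    have hspne : (univ.filter (fun x => p x ≠ 0)).Nonempty :=
      ⟨amax, Finset.mem_filter.2 ⟨mem_univ _, hpmax⟩⟩
    set m : Fin 30 := (univ.filter (fun x => p x ≠ 0)).min' hspne with hm
    have hpm : p m ≠ 0 := (Finset.mem_filter.1 ((univ.filter (fun x => p x ≠ 0)).min'_mem hspne)).2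
    have hsupp_in : ∀ a, p a ≠ 0 → (m:ℕ) ≤ (a:ℕ) ∧ (a:ℕ) ≤ (m:ℕ) + 2 := by
      intro a ha
      have h1 : m ≤ a := Finset.min'_le _ a (Finset.mem_filter.2 ⟨mem_univ _, ha⟩)
      have h2 := hdiam a m ha hpm
      exact ⟨h1, h2.1⟩
    have hm29 : (m:ℕ) ≤ 29 := by omega
    -- center point
    set cc : Fin 30 := if h : (m:ℕ) + 1 ≤ 29 then ⟨(m:ℕ)+1, by omega⟩ else m with hcc
    have hccnear : ∀ a, p a ≠ 0 → (a:ℕ) ≤ (cc:ℕ) + 1 ∧ (cc:ℕ) ≤ (a:ℕ) + 1 := by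
      intro a ha
      obtain ⟨h1, h2⟩ := hsupp_in a ha
      have ha29 : (a:ℕ) ≤ 29 := by omega
      rw [hcc]
      split
      · simp only []
        omega
      · have : (m:ℕ) = 29 := by omega
        omega
    have hDDcc : DD n p cc ≤ 1 := near_val n p hp0 hp1 cc hccnear
    -- every support point of q is close to m
    have hsupq : ∀ b, q b ≠ 0 → ((m:ℕ):ℤ) - 1 ≤ ((b:ℕ):ℤ) ∧ ((b:ℕ):ℤ) ≤ ((m:ℕ):ℤ) + 3 := by
      intro b hb
      have h1 : DD n p b ≤ 2 * ε := by
        have := Hq b cc hb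
        linarith
      have h2 := far_mass n p hp0 b (2 * ε) h1
      have h3 : ∑ x ∈ univ.filter (Far b), p x < 1 := by
        have h4 : (0:ℝ) ≤ ∑ x ∈ univ.filter (Far b), p x :=
          Finset.sum_nonneg (fun x _ => hp0 x)
        nlinarith
      obtain ⟨x, hx, hnf⟩ := exists_nonzero_near p hp0 hp1 b h3
      obtain ⟨h5, h6⟩ := hsupp_in x hx
      unfold Far at hnf
      push_neg at hnf
      omega
    refine ⟨max (((m:ℕ):ℤ) - 1) 0, min (((m:ℕ):ℤ) + 3) 29, ?_, ?_, ?_, ?_, ?_⟩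
    · exact le_max_right _ _
    · exact min_le_right _ _
    · have : ((m:ℕ):ℤ) ≤ 29 := by exact_mod_cast hm29
      omega
    · omega
    · intro x hx
      have hx29 : (x:ℕ) ≤ 29 := by omega
      rcases hx with h | h
      · obtain ⟨h1, h2⟩ := hsupp_in x h
        constructor
        · apply max_le <;> omega
        · apply le_min <;> omega
      · obtain ⟨h1, h2⟩ := hsupq x h
        constructor
        · apply max_le <;> omega
        · apply le_min <;> omega



end StmtAux

/-- for all large enough `n`, if `φ : G_{n+1} → ℕ` is bounded by `200·2^n`,
then for any mixed Nash equilibrium `σ = (α,β)` of the high-degree imitation game there is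
a small cube `C(v,w)` containing, in each coordinate `i`, the supports of both `α_i`
(player `A_i`'s mixed strategy) and `β_i` (player `B_i`'s mixed strategy). -/
theorem stmt3 :
    ∃ n₀ : ℕ, ∀ n : ℕ, n₀ ≤ n →
      ∀ φ : (Fin (n+1) → ℤ) → ℕ,
        (∀ x, inGrid n x → φ x ≤ 200 * 2 ^ n) →
        ∀ σ : (Fin (n+1) ⊕ Fin (n+1)) → Fin 30 → ℝ,
          IsMixedNash (hdImitationU n (fun x => (φ x : ℝ))) σ →
          ∃ v w : Fin (n+1) → ℤ, IsSmallCube n v w ∧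
            ∀ (i : Fin (n+1)) (x : Fin 30),
              (σ (Sum.inl i) x ≠ 0 ∨ σ (Sum.inr i) x ≠ 0) →
              v i ≤ ((x : ℕ) : ℤ) ∧ ((x : ℕ) : ℤ) ≤ w i := by
  refine ⟨15, ?_⟩
  intro n hn φ hφ σ hN
  have hσ := hN.1
  have key : ∀ i : Fin (n+1), ∃ v w : ℤ, 0 ≤ v ∧ w ≤ 29 ∧ v ≤ w ∧ w - v ≤ 4 ∧
      ∀ x : Fin 30, (σ (Sum.inl i) x ≠ 0 ∨ σ (Sum.inr i) x ≠ 0) →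
        v ≤ ((x:ℕ):ℤ) ∧ ((x:ℕ):ℤ) ≤ w := by
    intro i
    obtain ⟨HA, HB⟩ := StmtAux.nash_ineq n φ σ hφ hN i
    set α := σ (Sum.inl i) with hα
    set β := σ (Sum.inr i) with hβ
    have hα0 : ∀ x, 0 ≤ α x := fun x => hσ.1 _ x
    have hβ0 : ∀ x, 0 ≤ β x := fun x => hσ.1 _ x
    have hα1 : ∑ x, α x = 1 := hσ.2 _
    have hβ1 : ∑ x, β x = 1 := hσ.2 _
    -- union of supports and its maximum
    have hSne : (univ.filter (fun x : Fin 30 => α x ≠ 0 ∨ β x ≠ 0)).Nonempty := by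
      by_contra hc
      rw [Finset.not_nonempty_iff_eq_empty] at hc
      have : ∑ x, α x = 0 := by
        apply Finset.sum_eq_zero
        intro x _
        by_contra hx
        have : x ∈ univ.filter (fun x : Fin 30 => α x ≠ 0 ∨ β x ≠ 0) :=
          Finset.mem_filter.2 ⟨mem_univ _, Or.inl hx⟩
        rw [hc] at this
        exact absurd this (Finset.notMem_empty x)
      rw [hα1] at this
      norm_num at this
    set xmax := (univ.filter (fun x : Fin 30 => α x ≠ 0 ∨ β x ≠ 0)).max' hSne with hxm
    have hxmem := (univ.filter (fun x : Fin 30 => α x ≠ 0 ∨ β x ≠ 0)).max'_mem hSne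
    have hxsupp : α xmax ≠ 0 ∨ β xmax ≠ 0 := (Finset.mem_filter.1 hxmem).2
    have hxle : ∀ x : Fin 30, (α x ≠ 0 ∨ β x ≠ 0) → (x:ℕ) ≤ (xmax:ℕ) := by
      intro x hx
      have : x ≤ xmax := Finset.le_max' _ x (Finset.mem_filter.2 ⟨mem_univ _, hx⟩)
      exact this
    rcases hxsupp with hplay | hplay
    · obtain ⟨v, w, h1, h2, h3, h4, h5⟩ :=
        StmtAux.core n hn α β hα0 hβ0 hα1 hβ1 HA HB xmax hplay
          (fun x hx => hxle x (Or.inl hx)) (fun x hx => hxle x (Or.inr hx))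
      exact ⟨v, w, h1, h2, h3, h4, fun x hx => h5 x hx⟩
    · obtain ⟨v, w, h1, h2, h3, h4, h5⟩ :=
        StmtAux.core n hn β α hβ0 hα0 hβ1 hα1 HB HA xmax hplay
          (fun x hx => hxle x (Or.inr hx)) (fun x hx => hxle x (Or.inl hx))
      exact ⟨v, w, h1, h2, h3, h4, fun x hx => h5 x hx.symm⟩
  choose v w hv0 hw29 hvw hwv4 hmem using key
  refine ⟨v, w, ⟨?_, ?_, hvw, hwv4⟩, ?_⟩
  · intro i
    exact ⟨hv0 i, le_trans (hvw i) (hw29 i)⟩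
  · intro i
    exact ⟨le_trans (hv0 i) (hvw i), hw29 i⟩
  · intro i x hx
    exact hmem i x hx
end

section
/- There exists n₀ ∈ ℕ such that for every n ≥ n₀ the following holds. Let β be a probability distribution on the integers {0,1,…,29}, and let v* = min_{a ∈ {0,…,29}} E_{b∼β}[(a − b)^{2n}] be the minimal expected loss obtainable by choosing an integer in {0,…,29} against β. Then there exists an integer c with 0 ≤ c ≤ 27 such that for every integer a ∈ {0,…,29} with a ∉ {c, c+1, c+2}, one has E_{b∼β}[(a − b)^{2n}] ≥ v* + 3^n. -/
open Finset

lemma core_ineq (n : ℕ) (hn : 1 ≤ n) (s : ℝ) (hs : 0 ≤ s) :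
    (s+2)^(2*n) + (s+1)^(2*n) + 4^n ≤ (s+3)^(2*n) + s^(2*n) := by
  have h1 : (∑ i ∈ range n, ((s+3)^2)^i * ((s+2)^2)^(n-1-i)) * ((s+3)^2 - (s+2)^2)
      = ((s+3)^2)^n - ((s+2)^2)^n := geom_sum₂_mul _ _ n
  have h2 : (∑ i ∈ range n, ((s+1)^2)^i * (s^2)^(n-1-i)) * ((s+1)^2 - s^2)
      = ((s+1)^2)^n - (s^2)^n := geom_sum₂_mul _ _ n
  set S1 := ∑ i ∈ range n, ((s+3)^2)^i * ((s+2)^2)^(n-1-i) with hS1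
  set S2 := ∑ i ∈ range n, ((s+1)^2)^i * (s^2)^(n-1-i) with hS2
  have hle : S2 ≤ S1 := by
    apply sum_le_sum
    intro i _
    apply mul_le_mul
    · exact pow_le_pow_left₀ (by positivity) (by nlinarith) i
    · exact pow_le_pow_left₀ (by positivity) (by nlinarith) _
    · positivity
    · positivity
  have hS1lb : (4:ℝ)^(n-1) ≤ S1 := by
    have h0 : (0:ℕ) ∈ range n := mem_range.mpr hn
    have := Finset.single_le_sum (f := fun i => ((s+3)^2)^i * ((s+2)^2)^(n-1-i))
      (fun i _ => by positivity) h0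
    calc (4:ℝ)^(n-1) ≤ ((s+2)^2)^(n-1) := pow_le_pow_left₀ (by norm_num) (by nlinarith) _
      _ = ((s+3)^2)^0 * ((s+2)^2)^(n-1-0) := by simp
      _ ≤ S1 := this
  have h4 : (4:ℝ)^n = 4 * 4^(n-1) := by
    rw [← pow_succ']
    congr 1
    omega
  have e1 : (s+3)^(2*n) = ((s+3)^2)^n := by rw [pow_mul]
  have e2 : (s+2)^(2*n) = ((s+2)^2)^n := by rw [pow_mul]
  have e3 : (s+1)^(2*n) = ((s+1)^2)^n := by rw [pow_mul]
  have e4 : s^(2*n) = (s^2)^n := by rw [pow_mul]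
  rw [e1, e2, e3, e4, h4]
  have hmul : S2 * ((s+1)^2 - s^2) ≤ S1 * ((s+1)^2 - s^2) :=
    mul_le_mul_of_nonneg_right hle (by nlinarith)
  nlinarith [h1, h2, hmul, hS1lb]

lemma step_ineq (n : ℕ) (x : ℝ) : 2*(x+1)^(2*n) ≤ (x+2)^(2*n) + x^(2*n) := by
  have hc : ConvexOn ℝ Set.univ (fun t : ℝ => t ^ (2*n)) := (even_two_mul n).convexOn_pow
  have h := hc.2 (Set.mem_univ x) (Set.mem_univ (x+2))
    (by norm_num : (0:ℝ) ≤ 1/2) (by norm_num : (0:ℝ) ≤ 1/2) (by norm_num)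
  simp only [smul_eq_mul] at h
  have hx : (1/2)*x + (1/2)*(x+2) = x + 1 := by ring
  rw [hx] at h
  linarith

lemma D_mono (n : ℕ) (s t : ℤ) (h : s ≤ t) :
    ((s:ℝ)+1)^(2*n) - (s:ℝ)^(2*n) ≤ ((t:ℝ)+1)^(2*n) - (t:ℝ)^(2*n) := by
  obtain ⟨d, rfl⟩ : ∃ d : ℕ, t = s + d := ⟨(t - s).toNat, by omega⟩
  clear h
  induction d with
  | zero => simp
  | succ d ih =>
    have hstep := step_ineq n ((s:ℝ) + d)
    have hc : ((s + (d+1:ℕ) : ℤ):ℝ) = ((s:ℝ) + d) + 1 := by push_cast; ring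
    have hc2 : ((s + (d:ℕ) : ℤ):ℝ) = (s:ℝ) + d := by push_cast; ring
    rw [hc]
    rw [hc2] at ih
    have h2 : ((s:ℝ) + d + 1 + 1) = (s:ℝ) + d + 2 := by ring
    rw [h2]
    linarith

lemma core_int (n : ℕ) (hn : 1 ≤ n) (j : ℤ) :
    ((j:ℝ)+2)^(2*n) + ((j:ℝ)+1)^(2*n) + 4^n ≤ ((j:ℝ)+3)^(2*n) + (j:ℝ)^(2*n) := by
  rcases le_or_gt 0 j with hj | hj
  · have := core_ineq n hn (j:ℝ) (by exact_mod_cast hj)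
    linarith
  · rcases eq_or_lt_of_le (by omega : j ≤ -1) with h1 | h1
    · rw [h1]
      norm_num
      rw [zero_pow (by omega : 2*n ≠ 0)]
      have : ((2:ℝ))^(2*n) = 4^n := by rw [pow_mul]; norm_num
      linarith [this]
    · rcases eq_or_lt_of_le (by omega : j ≤ -2) with h2 | h2
      · rw [h2]
        norm_num
        rw [zero_pow (by omega : 2*n ≠ 0)]
        have : ((2:ℝ))^(2*n) = 4^n := by rw [pow_mul]; norm_num
        linarith [this]
      · -- j ≤ -3
        have hj3 : j ≤ -3 := by omega
        set u : ℤ := -3 - j with hu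
        have hu0 : 0 ≤ u := by omega
        have hc := core_ineq n hn (u:ℝ) (by exact_mod_cast hu0)
        have hju : (j:ℝ) = -3 - (u:ℝ) := by rw [hu]; push_cast; ring
        have r1 : (j:ℝ)+2 = -((u:ℝ)+1) := by rw [hju]; ring
        have r2 : (j:ℝ)+1 = -((u:ℝ)+2) := by rw [hju]; ring
        have r3 : (j:ℝ)+3 = -((u:ℝ)) := by rw [hju]; ring
        have r4 : (j:ℝ) = -((u:ℝ)+3) := by rw [hju]; ring
        rw [r1, r2, r3, r4]
        rw [Even.neg_pow (even_two_mul n), Even.neg_pow (even_two_mul n),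
          Even.neg_pow (even_two_mul n), Even.neg_pow (even_two_mul n)]
        linarith

lemma key_ineq (n : ℕ) (hn : 1 ≤ n) (j e : ℤ) (he : 3 ≤ e) :
    ((j:ℝ)+1)^(2*n) + ((j:ℝ)+(e:ℝ)-1)^(2*n) + 4^n ≤ (j:ℝ)^(2*n) + ((j:ℝ)+(e:ℝ))^(2*n) := by
  have hcore := core_int n hn j
  have hmono := D_mono n (j+2) (j+e-1) (by omega)
  push_cast at hmono
  have e1 : ((j:ℝ)+2+1) = (j:ℝ)+3 := by ring
  have e2 : ((j:ℝ)+(e:ℝ)-1+1) = (j:ℝ)+(e:ℝ) := by ring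
  rw [e1, e2] at hmono
  linarith

lemma key_ineq₂ (n : ℕ) (hn : 1 ≤ n) (a b k : ℕ) (hab : a + 3 ≤ b) :
    ((a:ℝ) + 1 - (k:ℝ))^(2*n) + ((b:ℝ) - 1 - (k:ℝ))^(2*n) + 4^n
      ≤ ((a:ℝ) - (k:ℝ))^(2*n) + ((b:ℝ) - (k:ℝ))^(2*n) := by
  have hki := key_ineq n hn ((a:ℤ) - (k:ℤ)) ((b:ℤ) - (a:ℤ)) (by omega)
  push_cast at hki
  have e1 : (a:ℝ) - (k:ℝ) + 1 = (a:ℝ) + 1 - (k:ℝ) := by ring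
  have e2 : (a:ℝ) - (k:ℝ) + ((b:ℝ) - (a:ℝ)) - 1 = (b:ℝ) - 1 - (k:ℝ) := by ring
  have e3 : (a:ℝ) - (k:ℝ) + ((b:ℝ) - (a:ℝ)) = (b:ℝ) - (k:ℝ) := by ring
  rw [e1, e2, e3] at hki
  exact hki

lemma nat234 (n : ℕ) (h : 3 ≤ n) : 2 * 3^n ≤ 4^n := by
  induction n with
  | zero => omega
  | succ k ih =>
    rcases Nat.lt_or_ge k 3 with hk | hk
    · interval_cases k
      · omega
      · omega
      · norm_num
    · have h1 := ih hk
      calc 2*3^(k+1) = 3*(2*3^k) := by ring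
        _ ≤ 3*4^k := by omega
        _ ≤ 4*4^k := Nat.mul_le_mul_right _ (by norm_num)
        _ = 4^(k+1) := by rw [pow_succ]; ring

/-- for all large enough `n`, for any probability distribution
`y = (y_0,…,y_{29})` on `{0,…,29}`, with `v* = min_a E_{b∼y}[(a-b)^{2n}]`, there are three
consecutive integers `c, c+1, c+2` (with `c ≤ 27`) such that every other integer
`a ∈ {0,…,29}` has expected loss at least `v* + 3^n`. -/
theorem stmt4 :
    ∃ n₀ : ℕ, ∀ n : ℕ, n₀ ≤ n →
      ∀ y : Fin 30 → ℝ, (∀ k, 0 ≤ y k) → (∑ k, y k) = 1 →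
      ∃ c : ℕ, c ≤ 27 ∧
        ∀ a : Fin 30, (a : ℕ) ≠ c → (a : ℕ) ≠ c + 1 → (a : ℕ) ≠ c + 2 →
          (∑ k : Fin 30, y k * (((a : ℕ) : ℝ) - ((k : ℕ) : ℝ)) ^ (2 * n)) ≥
            (Finset.univ.inf' Finset.univ_nonempty
              (fun a' : Fin 30 =>
                ∑ k : Fin 30, y k * (((a' : ℕ) : ℝ) - ((k : ℕ) : ℝ)) ^ (2 * n)))
            + 3 ^ n := by
  classical
  use 3
  intro n hn y hy0 hy1
  set F : Fin 30 → ℝ :=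
    fun a' : Fin 30 => ∑ k : Fin 30, y k * (((a' : ℕ) : ℝ) - ((k : ℕ) : ℝ)) ^ (2 * n) with hF
  set v : ℝ := Finset.univ.inf' Finset.univ_nonempty F with hv
  have hpow3 : (0:ℝ) < 3^n := by positivity
  obtain ⟨m, -, hm⟩ := Finset.exists_mem_eq_inf' (Finset.univ_nonempty) F
  rw [← hv] at hm
  set L : Finset (Fin 30) := Finset.univ.filter (fun a => F a < v + 3^n) with hL
  have hmL : m ∈ L := by
    rw [hL, Finset.mem_filter]
    exact ⟨Finset.mem_univ m, by rw [← hm]; linarith⟩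
  have hLne : L.Nonempty := ⟨m, hmL⟩
  set a₀ := L.min' hLne with ha₀
  set a₁ := L.max' hLne with ha₁
  have ha₀L : a₀ ∈ L := L.min'_mem hLne
  have ha₁L : a₁ ∈ L := L.max'_mem hLne
  have hvle : ∀ a : Fin 30, v ≤ F a := fun a => by
    rw [hv]; exact Finset.inf'_le F (Finset.mem_univ a)
  have hfa₀ : F a₀ < v + 3^n := by
    have h := ha₀L; rw [hL, Finset.mem_filter] at h; exact h.2
  have hfa₁ : F a₁ < v + 3^n := by
    have h := ha₁L; rw [hL, Finset.mem_filter] at h; exact h.2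
  have hgap : (a₁ : ℕ) ≤ (a₀ : ℕ) + 2 := by
    by_contra hcon
    push_neg at hcon
    have h3 : (a₀:ℕ) + 3 ≤ (a₁:ℕ) := hcon
    have ha₁lt : (a₁:ℕ) ≤ 29 := Nat.lt_succ_iff.mp a₁.isLt
    have hvA := hvle ⟨(a₀:ℕ)+1, by omega⟩
    have hvB := hvle ⟨(a₁:ℕ)-1, by omega⟩
    simp only [hF] at hvA hvB hfa₀ hfa₁
    have hb1 : 1 ≤ (a₁:ℕ) := by omega
    have hAcast : ∀ k : Fin 30, (((((a₀:ℕ)+1 : ℕ)):ℝ) - ((k:ℕ):ℝ)) = ((a₀:ℕ):ℝ) + 1 - ((k:ℕ):ℝ) := by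
      intro k; push_cast; ring
    have hBcast : ∀ k : Fin 30, (((((a₁:ℕ)-1 : ℕ)):ℝ) - ((k:ℕ):ℝ)) = ((a₁:ℕ):ℝ) - 1 - ((k:ℕ):ℝ) := by
      intro k; push_cast [Nat.cast_sub hb1]; ring
    simp only [hAcast] at hvA
    simp only [hBcast] at hvB
    have hterm : ∀ k ∈ Finset.univ, 
        y k * (((a₀:ℕ):ℝ) + 1 - ((k:ℕ):ℝ))^(2*n) + y k * (((a₁:ℕ):ℝ) - 1 - ((k:ℕ):ℝ))^(2*n)
          + y k * 4^n
        ≤ y k * (((a₀:ℕ):ℝ) - ((k:ℕ):ℝ))^(2*n) + y k * (((a₁:ℕ):ℝ) - ((k:ℕ):ℝ))^(2*n) := by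
      intro k _
      have hki := key_ineq₂ n (by omega) (a₀:ℕ) (a₁:ℕ) (k:ℕ) h3
      nlinarith [hy0 k, mul_le_mul_of_nonneg_left hki (hy0 k)]
    have hsum := Finset.sum_le_sum hterm
    simp only [Finset.sum_add_distrib, ← Finset.sum_mul] at hsum
    rw [hy1, one_mul] at hsum
    have h34 : 2 * (3:ℝ)^n ≤ 4^n := by exact_mod_cast (by exact_mod_cast nat234 n hn : ((2 * 3^n : ℕ):ℝ) ≤ ((4^n : ℕ):ℝ))
    linarith
  refine ⟨min (a₀:ℕ) 27, min_le_right _ _, ?_⟩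
  intro a hne0 hne1 hne2
  by_contra hlt
  push_neg at hlt
  have haL : a ∈ L := by
    rw [hL, Finset.mem_filter]
    refine ⟨Finset.mem_univ a, ?_⟩
    simp only [hF]
    exact hlt
  have h₀ : (a₀:ℕ) ≤ (a:ℕ) := Finset.min'_le L a haL
  have h₁ : (a:ℕ) ≤ (a₁:ℕ) := Finset.le_max' L a haL
  have ha29 : (a:ℕ) ≤ 29 := Nat.lt_succ_iff.mp a.isLt
  omega
end

section
/- Let A and B be finite sets with |A| = |B| = N, and let v_C : A×B → ℝ, v_A : A → ℝ, v_B : B → ℝ be arbitrary functions, defining the two-player game with utilities u_A(a,b) = v_C(a,b) + v_A(a) for Alice and u_B(a,b) = v_C(a,b) + v_B(b) for Bob. Then there exists a two-player congestion game over a facility set M with |M| = N² + 2N, together with a feasible subset F_a ⊆ M for each a ∈ A (Alice's actions) and a feasible subset F_b ⊆ M for each b ∈ B (Bob's actions), such that for every (a,b) ∈ A×B, Alice's congestion-game utility at the profile (F_a, F_b) equals u_A(a,b) and Bob's equals u_B(a,b). -/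
/-- every two-player "structured" game, with utilities
`u_A(a,b) = v_C(a,b) + v_A(a)` and `u_B(a,b) = v_C(a,b) + v_B(b)` on action sets of size
`N`, can be represented as a two-player congestion game with `N² + 2N` facilities:
there are cost functions `c_j` and feasible subsets `F_a` (for Alice) and `F_b` (for Bob)
such that at each profile `(F_a, F_b)` the congestion-game utilities (sum over one's
facilities of the facility cost at its congestion) equal `u_A(a,b)` and `u_B(a,b)`. -/
theorem stmt5 {A B : Type} [Fintype A] [Fintype B] [DecidableEq A] [DecidableEq B]
    (N : ℕ) (hA : Fintype.card A = N) (hB : Fintype.card B = N)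
    (vC : A → B → ℝ) (vA : A → ℝ) (vB : B → ℝ) :
    ∃ (c : Fin (N ^ 2 + 2 * N) → ℕ → ℝ)
      (FA : A → Finset (Fin (N ^ 2 + 2 * N)))
      (FB : B → Finset (Fin (N ^ 2 + 2 * N))),
      ∀ (a : A) (b : B),
        (∑ j ∈ FA a,
            c j ((if j ∈ FA a then 1 else 0) + (if j ∈ FB b then 1 else 0)))
          = vC a b + vA a ∧
        (∑ j ∈ FB b,
            c j ((if j ∈ FA a then 1 else 0) + (if j ∈ FB b then 1 else 0)))
          = vC a b + vB b := by
  classical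
  obtain ⟨e⟩ : Nonempty ((A × B ⊕ (A ⊕ B)) ≃ Fin (N ^ 2 + 2 * N)) := by
    refine ⟨Fintype.equivFinOfCardEq ?_⟩
    simp [hA, hB]
    ring
  set cfun : (A × B ⊕ (A ⊕ B)) → ℕ → ℝ := fun x n =>
    match x with
    | .inl (a, b) => if n = 2 then vC a b else 0
    | .inr (.inl a) => vA a
    | .inr (.inr b) => vB b with hcfun
  refine ⟨fun j n => cfun (e.symm j) n,
    fun a => ((Finset.univ.image fun b => (Sum.inl (a, b) : A × B ⊕ (A ⊕ B)))
        ∪ {Sum.inr (Sum.inl a)}).map e.toEmbedding,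
    fun b => ((Finset.univ.image fun a => (Sum.inl (a, b) : A × B ⊕ (A ⊕ B)))
        ∪ {Sum.inr (Sum.inr b)}).map e.toEmbedding,
    fun a b => ?_⟩
  have hdisA : Disjoint (Finset.univ.image fun b => (Sum.inl (a, b) : A × B ⊕ (A ⊕ B)))
      ({Sum.inr (Sum.inl a)} : Finset (A × B ⊕ (A ⊕ B))) := by simp
  have hdisB : Disjoint (Finset.univ.image fun a => (Sum.inl (a, b) : A × B ⊕ (A ⊕ B)))
      ({Sum.inr (Sum.inr b)} : Finset (A × B ⊕ (A ⊕ B))) := by simp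
  have injA : ∀ x ∈ (Finset.univ : Finset B), ∀ y ∈ Finset.univ,
      (Sum.inl (a, x) : A × B ⊕ (A ⊕ B)) = Sum.inl (a, y) → x = y := by simp
  have injB : ∀ x ∈ (Finset.univ : Finset A), ∀ y ∈ Finset.univ,
      (Sum.inl (x, b) : A × B ⊕ (A ⊕ B)) = Sum.inl (y, b) → x = y := by simp
  constructor
  · rw [Finset.sum_map, Finset.sum_union hdisA, Finset.sum_image injA,
      Finset.sum_singleton]
    simp only [Finset.mem_map_equiv, Equiv.coe_toEmbedding, Equiv.symm_apply_apply, hcfun]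
    have h2 : ∀ b' : B,
        ((Sum.inl (a, b') : A × B ⊕ (A ⊕ B)) ∈
          (Finset.univ.image fun a' => (Sum.inl (a', b) : A × B ⊕ (A ⊕ B)))
            ∪ {Sum.inr (Sum.inr b)}) ↔ (b' = b) := by
      intro b'; simp [eq_comm]
    have step : ∀ b' : B,
        (if ((if ((Sum.inl (a, b') : A × B ⊕ (A ⊕ B)) ∈
              (Finset.univ.image fun b'' => (Sum.inl (a, b'') : A × B ⊕ (A ⊕ B)))
                ∪ {Sum.inr (Sum.inl a)}) then 1 else 0) +
            (if ((Sum.inl (a, b') : A × B ⊕ (A ⊕ B)) ∈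
              (Finset.univ.image fun a' => (Sum.inl (a', b) : A × B ⊕ (A ⊕ B)))
                ∪ {Sum.inr (Sum.inr b)}) then 1 else 0)) = 2 then vC a b' else 0)
          = (if b' = b then vC a b' else 0 : ℝ) := by
      intro b'
      have hm1 : (Sum.inl (a, b') : A × B ⊕ (A ⊕ B)) ∈
          (Finset.univ.image fun b'' => (Sum.inl (a, b'') : A × B ⊕ (A ⊕ B)))
            ∪ {Sum.inr (Sum.inl a)} := by simp
      rw [if_pos hm1]
      by_cases h : b' = b
      · rw [if_pos ((h2 b').mpr h)]; simp [h]
      · rw [if_neg fun hc => h ((h2 b').mp hc)]; simp [h]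
    rw [Finset.sum_congr rfl fun b' _ => step b', Finset.sum_ite_eq' Finset.univ b]
    simp
  · rw [Finset.sum_map, Finset.sum_union hdisB, Finset.sum_image injB,
      Finset.sum_singleton]
    simp only [Finset.mem_map_equiv, Equiv.coe_toEmbedding, Equiv.symm_apply_apply, hcfun]
    have h1 : ∀ a' : A,
        ((Sum.inl (a', b) : A × B ⊕ (A ⊕ B)) ∈
          (Finset.univ.image fun b' => (Sum.inl (a, b') : A × B ⊕ (A ⊕ B)))
            ∪ {Sum.inr (Sum.inl a)}) ↔ (a' = a) := by
      intro a'; simp [eq_comm]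
    have step : ∀ a' : A,
        (if ((if ((Sum.inl (a', b) : A × B ⊕ (A ⊕ B)) ∈
              (Finset.univ.image fun b' => (Sum.inl (a, b') : A × B ⊕ (A ⊕ B)))
                ∪ {Sum.inr (Sum.inl a)}) then 1 else 0) +
            (if ((Sum.inl (a', b) : A × B ⊕ (A ⊕ B)) ∈
              (Finset.univ.image fun a'' => (Sum.inl (a'', b) : A × B ⊕ (A ⊕ B)))
                ∪ {Sum.inr (Sum.inr b)}) then 1 else 0)) = 2 then vC a' b else 0)
          = (if a' = a then vC a' b else 0 : ℝ) := by
      intro a'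
      have hm2 : (Sum.inl (a', b) : A × B ⊕ (A ⊕ B)) ∈
          (Finset.univ.image fun a'' => (Sum.inl (a'', b) : A × B ⊕ (A ⊕ B)))
            ∪ {Sum.inr (Sum.inr b)} := by simp
      rw [if_pos hm2]
      by_cases h : a' = a
      · rw [if_pos ((h1 a').mpr h)]; simp [h]
      · rw [if_neg fun hc => h ((h1 a').mp hc)]; simp [h]
    rw [Finset.sum_congr rfl fun a' _ => step a', Finset.sum_ite_eq' Finset.univ a]
    simp
end

section
/- Let n ≥ 1 and let v_C : {0,1}^n × {0,1}^n → ℝ, v_A : {0,1}^n → ℝ, v_B : {0,1}^n → ℝ. Consider the 2n-player binary-action game in which Alice's players i ∈ {1,…,n} jointly choose a ∈ {0,1}^n (player i chooses the bit a_i), Bob's players i ∈ {1,…,n} jointly choose b ∈ {0,1}^n, each of Alice's players receives utility u_A(a,b) = v_C(a,b) + v_A(a), and each of Bob's players receives utility u_B(a,b) = v_C(a,b) + v_B(b). Then there exists a 2n-player congestion game over a facility set M with |M| = 2^{2n} + 2^{n+1}, in which each player has exactly two feasible subsets of M (one for each value of his bit), such that for every (a,b) ∈ {0,1}^n × {0,1}^n,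 the congestion-game utility of every Alice player at the profile of feasible subsets corresponding to (a,b) equals u_A(a,b), and that of every Bob player equals u_B(a,b). -/
/-! For every coalition `κ` of players (here: everybody, Alice's players, Bob's players) and
every joint action `τ` of `κ` there is one facility, used by exactly those members of `κ` whose
action agrees with `τ`. Its congestion reaches `|κ|` only when `κ` plays `τ`, so a cost paying
`v τ` at congestion `|κ|` and `0` otherwise gives every member of `κ` exactly `v` of the joint
action `κ` actually plays. Summing the blocks for `v_C`, `v_A`, `v_B` gives the utilities. -/

open Finset

section CongestionGame

variable {P M M' A R : Type*} [Fintype P] [DecidableEq M] [DecidableEq M'] [AddCommMonoid R]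

def congestion (F : P → A → Finset M) (σ : P → A) (j : M) : ℕ :=
  ∑ p, if j ∈ F p (σ p) then 1 else 0

def utility (c : M → ℕ → R) (F : P → A → Finset M) (σ : P → A) (p : P) : R :=
  ∑ j ∈ F p (σ p), c j (congestion F σ j)

lemma utility_map_equiv (e : M ≃ M') (c : M → ℕ → R) (F : P → A → Finset M) (σ : P → A)
    (p : P) :
    utility (fun j => c (e.symm j)) (fun q x => (F q x).map e.toEmbedding) σ p =
      utility c F σ p := by
  have hcong (j : M) : congestion (fun q x => (F q x).map e.toEmbedding) σ (e j) =
      congestion F σ j := by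
    simp only [congestion, mem_map_equiv, Equiv.symm_apply_apply]
  simp only [utility, sum_map, Equiv.coe_toEmbedding, Equiv.symm_apply_apply, hcong]

lemma utility_disjSum (c₁ : M → ℕ → R) (c₂ : M' → ℕ → R) (F₁ : P → A → Finset M)
    (F₂ : P → A → Finset M') (σ : P → A) (p : P) :
    utility (Sum.elim c₁ c₂) (fun q x => (F₁ q x).disjSum (F₂ q x)) σ p =
      utility c₁ F₁ σ p + utility c₂ F₂ σ p := by
  simp only [utility, congestion, sum_disjSum, inl_mem_disjSum, inr_mem_disjSum, Sum.elim_inl,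
    Sum.elim_inr]

lemma exists_utility_eq_of_card_eq [Fintype M] {N : ℕ} (hM : Fintype.card M = N)
    (c : M → ℕ → R) (F : P → A → Finset M) :
    ∃ (c' : Fin N → ℕ → R) (F' : P → A → Finset (Fin N)),
      ∀ σ p, utility c' F' σ p = utility c F σ p :=
  let e := Fintype.equivFinOfCardEq hM
  ⟨_, _, utility_map_equiv e c F⟩

lemma utility_sum_elim {Q : Type*} [Fintype Q] (c : M → ℕ → R) (F : P ⊕ Q → A → Finset M)
    (a : P → A) (b : Q → A) (p : P ⊕ Q) :
    utility c F (Sum.elim a b) p = ∑ j ∈ F p (Sum.elim a b p), c j (∑ q : P ⊕ Q,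
      if j ∈ Sum.elim (fun i => F (.inl i) (a i)) (fun i => F (.inr i) (b i)) q then 1 else 0) := by
  simp only [utility, congestion]
  congr! 4 with _ _ q
  cases q <;> rfl

end CongestionGame

section Coalition

variable {P κ A R : Type*} [Fintype P] [DecidableEq P] [Fintype κ] [DecidableEq κ]
  [Fintype A] [DecidableEq A] [AddCommMonoid R]

def coalitionFacilities (ι : κ ↪ P) (p : P) (x : A) : Finset (κ → A) :=
  {τ | ∃ k, ι k = p ∧ τ k = x}

def coalitionCost (v : (κ → A) → R) (τ : κ → A) (g : ℕ) : R :=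
  if g = Fintype.card κ then v τ else 0

lemma congestion_coalitionFacilities (ι : κ ↪ P) (σ : P → A) (τ : κ → A) :
    congestion (coalitionFacilities ι) σ τ = #{k | τ k = σ (ι k)} := by
  rw [congestion, ← card_filter, ← card_map ι]
  congr 1
  ext p
  simp only [coalitionFacilities, mem_filter, mem_univ, true_and, mem_map]
  constructor
  · rintro ⟨k, rfl, hk⟩
    exact ⟨k, hk, rfl⟩
  · rintro ⟨k, hk, rfl⟩
    exact ⟨k, rfl, hk⟩

lemma congestion_coalitionFacilities_eq_card_iff (ι : κ ↪ P) (σ : P → A) (τ : κ → A) :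
    congestion (coalitionFacilities ι) σ τ = Fintype.card κ ↔ τ = σ ∘ ι := by
  rw [congestion_coalitionFacilities, ← card_univ, card_filter_eq_iff, funext_iff]
  simp

lemma utility_coalition_apply (ι : κ ↪ P) (v : (κ → A) → R) (σ : P → A) (k : κ) :
    utility (coalitionCost v) (coalitionFacilities ι) σ (ι k) = v (σ ∘ ι) := by
  rw [utility, sum_eq_single_of_mem (σ ∘ ι)]
  · simp [coalitionCost, congestion_coalitionFacilities_eq_card_iff]
  · simp [coalitionFacilities]
  · intro τ _ hτ
    simp [coalitionCost, congestion_coalitionFacilities_eq_card_iff, hτ]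

lemma utility_coalition_of_notMem (ι : κ ↪ P) (v : (κ → A) → R) (σ : P → A) {p : P}
    (hp : p ∉ Set.range ι) :
    utility (coalitionCost v) (coalitionFacilities ι) σ p = 0 := by
  have hempty : coalitionFacilities ι p (σ p) = ∅ := by
    simp only [coalitionFacilities, filter_eq_empty_iff]
    exact fun _ _ ⟨k, hk, _⟩ => hp ⟨k, hk⟩
  rw [utility, hempty, sum_empty]

end Coalition

section StructuredGame

variable {α β A R : Type*} [Fintype α] [DecidableEq α] [Fintype β] [DecidableEq β]
  [Fintype A] [DecidableEq A] [AddCommMonoid R]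

abbrev StructuredFacility (α β A : Type*) := (α ⊕ β → A) ⊕ ((α → A) ⊕ (β → A))

def structuredCost (vC : (α → A) → (β → A) → R) (vA : (α → A) → R) (vB : (β → A) → R) :
    StructuredFacility α β A → ℕ → R :=
  Sum.elim (coalitionCost fun σ => vC (σ ∘ Sum.inl) (σ ∘ Sum.inr))
    (Sum.elim (coalitionCost vA) (coalitionCost vB))

def structuredFacilities : α ⊕ β → A → Finset (StructuredFacility α β A) := fun p x =>
  (coalitionFacilities (Function.Embedding.refl _) p x).disjSum
    ((coalitionFacilities Function.Embedding.inl p x).disjSum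
      (coalitionFacilities Function.Embedding.inr p x))

omit [DecidableEq A] in
lemma card_structuredFacility :
    Fintype.card (StructuredFacility α β A) =
      Fintype.card A ^ (Fintype.card α + Fintype.card β) +
        (Fintype.card A ^ Fintype.card α + Fintype.card A ^ Fintype.card β) := by
  simp only [Fintype.card_sum, Fintype.card_fun]

lemma utility_structured_inl (vC : (α → A) → (β → A) → R) (vA : (α → A) → R)
    (vB : (β → A) → R) (σ : α ⊕ β → A) (i : α) :
    utility (structuredCost vC vA vB) structuredFacilities σ (Sum.inl i) =
      vC (σ ∘ Sum.inl) (σ ∘ Sum.inr) + vA (σ ∘ Sum.inl) := by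
  have hB : Sum.inl i ∉ Set.range (Function.Embedding.inr : β ↪ α ⊕ β) := by simp
  unfold structuredCost structuredFacilities
  rw [utility_disjSum, utility_disjSum,
    utility_coalition_of_notMem _ _ _ hB, add_zero]
  exact congr_arg₂ (· + ·) (utility_coalition_apply (.refl _) _ σ (Sum.inl i))
    (utility_coalition_apply .inl vA σ i)

lemma utility_structured_inr (vC : (α → A) → (β → A) → R) (vA : (α → A) → R)
    (vB : (β → A) → R) (σ : α ⊕ β → A) (i : β) :
    utility (structuredCost vC vA vB) structuredFacilities σ (Sum.inr i) =
      vC (σ ∘ Sum.inl) (σ ∘ Sum.inr) + vB (σ ∘ Sum.inr) := by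
  have hA : Sum.inr i ∉ Set.range (Function.Embedding.inl : α ↪ α ⊕ β) := by simp
  unfold structuredCost structuredFacilities
  rw [utility_disjSum, utility_disjSum,
    utility_coalition_of_notMem _ _ _ hA, zero_add]
  exact congr_arg₂ (· + ·) (utility_coalition_apply (.refl _) _ σ (Sum.inr i))
    (utility_coalition_apply .inr vB σ i)

end StructuredGame

theorem stmt6_general (n : ℕ)
    (vC : (Fin n → Bool) → (Fin n → Bool) → ℝ)
    (vA vB : (Fin n → Bool) → ℝ) :
    ∃ (c : Fin (2 ^ (2 * n) + 2 ^ (n + 1)) → ℕ → ℝ)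
      (F : (Fin n ⊕ Fin n) → Bool → Finset (Fin (2 ^ (2 * n) + 2 ^ (n + 1)))),
      ∀ a b : Fin n → Bool,
        (∀ i : Fin n,
          (∑ j ∈ F (Sum.inl i) (a i),
            c j (∑ p : Fin n ⊕ Fin n,
              if j ∈ Sum.elim (fun i' => F (Sum.inl i') (a i'))
                              (fun i' => F (Sum.inr i') (b i')) p then 1 else 0))
            = vC a b + vA a) ∧
        (∀ i : Fin n,
          (∑ j ∈ F (Sum.inr i) (b i),
            c j (∑ p : Fin n ⊕ Fin n,
              if j ∈ Sum.elim (fun i' => F (Sum.inl i') (a i'))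
                              (fun i' => F (Sum.inr i') (b i')) p then 1 else 0))
            = vC a b + vB b) := by
  have hcard : Fintype.card (StructuredFacility (Fin n) (Fin n) Bool) =
      2 ^ (2 * n) + 2 ^ (n + 1) := by
    rw [card_structuredFacility]
    simp only [Fintype.card_fin, Fintype.card_bool]
    ring
  obtain ⟨c, F, hF⟩ :=
    exists_utility_eq_of_card_eq hcard (structuredCost vC vA vB) structuredFacilities
  refine ⟨c, F, fun a b => ⟨fun i => ?_, fun i => ?_⟩⟩
  · refine (utility_sum_elim c F a b (.inl i)).symm.trans ?_
    rw [hF]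
    exact utility_structured_inl vC vA vB _ i
  · refine (utility_sum_elim c F a b (.inr i)).symm.trans ?_
    rw [hF]
    exact utility_structured_inr vC vA vB _ i

/-- every `2n`-player binary-action "structured" game, in which Alice's
players jointly choose `a ∈ {0,1}^n`, Bob's players jointly choose `b ∈ {0,1}^n`, each
Alice player gets `v_C(a,b) + v_A(a)` and each Bob player gets `v_C(a,b) + v_B(b)`, can be
represented as a `2n`-player congestion game with `2^{2n} + 2^{n+1}` facilities in which
every player has exactly two feasible subsets (one for each value of his bit): at the
profile of feasible subsets corresponding to `(a,b)`, the congestion-game utility of each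
Alice player equals `u_A(a,b)` and of each Bob player equals `u_B(a,b)`. -/
theorem stmt6 (n : ℕ) (hn : 1 ≤ n)
    (vC : (Fin n → Bool) → (Fin n → Bool) → ℝ)
    (vA vB : (Fin n → Bool) → ℝ) :
    ∃ (c : Fin (2 ^ (2 * n) + 2 ^ (n + 1)) → ℕ → ℝ)
      (F : (Fin n ⊕ Fin n) → Bool → Finset (Fin (2 ^ (2 * n) + 2 ^ (n + 1)))),
      ∀ a b : Fin n → Bool,
        (∀ i : Fin n,
          (∑ j ∈ F (Sum.inl i) (a i),
            c j (∑ p : Fin n ⊕ Fin n,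
              if j ∈ Sum.elim (fun i' => F (Sum.inl i') (a i'))
                              (fun i' => F (Sum.inr i') (b i')) p then 1 else 0))
            = vC a b + vA a) ∧
        (∀ i : Fin n,
          (∑ j ∈ F (Sum.inr i) (b i),
            c j (∑ p : Fin n ⊕ Fin n,
              if j ∈ Sum.elim (fun i' => F (Sum.inl i') (a i'))
                              (fun i' => F (Sum.inr i') (b i')) p then 1 else 0))
            = vC a b + vB b) :=
  stmt6_general n vC vA vB
end

section
/- For every n ≥ 1 and every function φ : {0,…,29}^{n+1} → ℝ, the high-degree imitation game associated with φ is a potential game; in particular, Φ(a,b) = −Σ_{i=1}^{n+1} (a_i − b_i)^{2n} − 2φ(a) − 2φ(b) is a potential function for it. -/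
/-- `Φ` is a potential function of the game `u`: any unilateral deviation changes the
deviator's utility exactly by the change in `Φ`. -/
def IsPotentialFn {I : Type} [DecidableEq I] {A : I → Type}
    (u : I → ((∀ j, A j) → ℝ)) (Φ : (∀ j, A j) → ℝ) : Prop :=
  ∀ (i : I) (x y : A i) (z : ∀ j, A j),
    u i (Function.update z i x) - u i (Function.update z i y)
      = Φ (Function.update z i x) - Φ (Function.update z i y)

/-- for every `n ≥ 1` and every `φ`, the high-degree imitation game is a
potential game, with potential `Φ(a,b) = -Σ (a_i - b_i)^{2n} - 2φ(a) - 2φ(b)`. -/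
theorem stmt7 (n : ℕ) (hn : 1 ≤ n) (φ : (Fin (n+1) → ℤ) → ℝ) :
    IsPotentialFn (hdImitationU n φ)
      (fun prof =>
        -(∑ i : Fin (n+1),
            (((prof (Sum.inl i) : ℕ) : ℝ) - ((prof (Sum.inr i) : ℕ) : ℝ)) ^ (2 * n)) -
        2 * φ (fun i => ((prof (Sum.inl i) : ℕ) : ℤ)) -
        2 * φ (fun i => ((prof (Sum.inr i) : ℕ) : ℤ))) := by
  intro p x y z
  cases p with
  | inl i =>
      have key : ∀ (w : Fin 30) (j : Fin (n+1)),
          Function.update z (Sum.inl i) w (Sum.inr j) = z (Sum.inr j) :=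
        fun w j => by simp [Function.update]
      simp only [hdImitationU, Sum.elim_inl, key]
      ring
  | inr i =>
      have key : ∀ (w : Fin 30) (j : Fin (n+1)),
          Function.update z (Sum.inr i) w (Sum.inl j) = z (Sum.inl j) :=
        fun w j => by simp [Function.update]
      simp only [hdImitationU, Sum.elim_inr, key]
      ring
end

section
/- Let d ≥ 1, let φ : {0,…,29}^d → ℝ with multilinear extension φ̄, let k ∈ {1,…,d} be a coordinate, and let v,w ∈ {0,…,29}^d with v_i ≤ w_i for all i. Suppose that φ(c) − φ(c + e_k) ≥ 1 for every integer point c with v ≤ c and c + e_k ≤ w (coordinatewise), where e_k is the k-th unit vector. Then for every x in the real box Π_i [v_i, w_i] and every δ ≥ 0 such that x + δ·e_k also lies in Π_i [v_i, w_i], one has φ̄(x) − φ̄(x + δ·e_k) ≥ δ. -/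
/-- The multilinear extension `φ̄` of `φ`: `φ̄(x) = E[φ(⌊x⌋ + s)]` where the `s_i` are
independent Bernoulli variables with success probabilities the fractional parts of `x_i`. -/
noncomputable def mulExt (d : ℕ) (φ : (Fin d → ℤ) → ℝ) (x : Fin d → ℝ) : ℝ :=
  ∑ s : Fin d → Bool,
    (∏ i, if s i then Int.fract (x i) else 1 - Int.fract (x i)) *
      φ (fun i => ⌊x i⌋ + if s i then 1 else 0)

/-- Piecewise linear interpolation of `ψ : ℤ → ℝ`. -/
noncomputable def plInterp (ψ : ℤ → ℝ) (t : ℝ) : ℝ :=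
  ψ ⌊t⌋ + Int.fract t * (ψ (⌊t⌋ + 1) - ψ ⌊t⌋)

lemma plInterp_intCast (ψ : ℤ → ℝ) (m : ℤ) : plInterp ψ (m : ℝ) = ψ m := by
  simp [plInterp]

lemma plInterp_key (ψ : ℤ → ℝ) (a b : ℤ)
    (hs : ∀ m : ℤ, a ≤ m → m + 1 ≤ b → ψ m - ψ (m + 1) ≥ 1) :
    ∀ n : ℕ, ∀ t t' : ℝ, (a : ℝ) ≤ t → t ≤ t' → t' ≤ (b : ℝ) →
      ⌊t'⌋ - ⌊t⌋ ≤ (n : ℤ) → plInterp ψ t' + t' ≤ plInterp ψ t + t := by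
  intro n
  induction n with
  | zero =>
    intro t t' hat htt hb hn
    have hff : ⌊t'⌋ = ⌊t⌋ := le_antisymm (by omega) (Int.floor_le_floor htt)
    rcases eq_or_lt_of_le htt with h | h
    · subst h; exact le_rfl
    · have hmt : (⌊t⌋ : ℝ) ≤ t := Int.floor_le t
      have hmt' : (⌊t⌋ : ℝ) < t' := lt_of_le_of_lt hmt h
      have ham : a ≤ ⌊t⌋ := Int.le_floor.mpr hat
      have hmb : ⌊t⌋ + 1 ≤ b := by
        have : (⌊t⌋ : ℝ) < (b : ℝ) := lt_of_lt_of_le hmt' hb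
        exact_mod_cast Int.add_one_le_of_lt (by exact_mod_cast this)
      have hslope := hs ⌊t⌋ ham hmb
      have e1 : (⌊t⌋ : ℝ) + Int.fract t = t := Int.floor_add_fract t
      have e2 : (⌊t⌋ : ℝ) + Int.fract t' = t' := by
        rw [← hff]; exact Int.floor_add_fract t'
      have hfr : Int.fract t ≤ Int.fract t' := by linarith
      have h1 : (Int.fract t' - Int.fract t) * ((ψ (⌊t⌋ + 1) - ψ ⌊t⌋) + 1) ≤ 0 :=
        mul_nonpos_of_nonneg_of_nonpos (by linarith) (by linarith)
      unfold plInterp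
      rw [hff]
      nlinarith [h1]
  | succ n ih =>
    intro t t' hat htt hb hn
    by_cases hcell : ⌊t'⌋ - ⌊t⌋ ≤ (n : ℤ)
    · exact ih t t' hat htt hb hcell
    · have h2 : ⌊t⌋ + 1 ≤ ⌊t'⌋ := by omega
      have ham : a ≤ ⌊t⌋ := Int.le_floor.mpr hat
      have hm1b : ⌊t⌋ + 1 ≤ b := by
        refine le_trans h2 ?_
        have : ⌊t'⌋ ≤ ⌊(b : ℝ)⌋ := Int.floor_le_floor hb
        simpa using this
      have hslope := hs ⌊t⌋ ham hm1b
      have step : ψ (⌊t⌋ + 1) + ((⌊t⌋ : ℝ) + 1) ≤ plInterp ψ t + t := by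
        have hf0 : 0 ≤ Int.fract t := Int.fract_nonneg t
        have hf1 : Int.fract t ≤ 1 := (Int.fract_lt_one t).le
        have e1 : (⌊t⌋ : ℝ) + Int.fract t = t := Int.floor_add_fract t
        have h1 : 0 ≤ (1 - Int.fract t) * (ψ ⌊t⌋ - ψ (⌊t⌋ + 1) - 1) :=
          mul_nonneg (by linarith) (by linarith)
        unfold plInterp
        nlinarith [h1]
      have hmid : ((⌊t⌋ + 1 : ℤ) : ℝ) ≤ t' := by
        refine le_trans ?_ (Int.floor_le t')
        exact_mod_cast h2
      have htail := ih ((⌊t⌋ + 1 : ℤ) : ℝ) t'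
        (by exact_mod_cast (by omega : a ≤ ⌊t⌋ + 1)) hmid hb
        (by rw [Int.floor_intCast]; omega)
      rw [plInterp_intCast] at htail
      calc plInterp ψ t' + t' ≤ ψ (⌊t⌋ + 1) + ((⌊t⌋ + 1 : ℤ) : ℝ) := htail
        _ = ψ (⌊t⌋ + 1) + ((⌊t⌋ : ℝ) + 1) := by push_cast; ring
        _ ≤ plInterp ψ t + t := step

lemma prod_split_at {M : Type*} [CommMonoid M] {d : ℕ} (k : Fin d) (f : Fin d → M) :
    ∏ i, f i = f k * ∏ i : {j : Fin d // j ≠ k}, f i.1 := by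
  rw [Fintype.prod_eq_mul_prod_compl k f]
  congr 1
  exact Finset.prod_subtype _ (fun i => by simp) f

lemma mulExt_split (d : ℕ) (φ : (Fin d → ℤ) → ℝ) (k : Fin d) (x : Fin d → ℝ) :
    mulExt d φ x = ∑ s : {j : Fin d // j ≠ k} → Bool,
      (∏ i : {j : Fin d // j ≠ k}, if s i then Int.fract (x i.1) else 1 - Int.fract (x i.1)) *
        plInterp (fun m => φ (fun i => if h : i = k then m
          else ⌊x i⌋ + if s ⟨i, h⟩ then 1 else 0)) (x k) := by
  rw [mulExt, ← Equiv.sum_comp (Equiv.funSplitAt k Bool).symm, Fintype.sum_prod_type,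
    Finset.sum_comm]
  refine Finset.sum_congr rfl fun s _ => ?_
  rw [Fintype.sum_bool]
  have harg : ∀ b : Bool,
      (fun i => ⌊x i⌋ + if (Equiv.funSplitAt k Bool).symm (b, s) i then 1 else 0) =
      (fun i => if h : i = k then (⌊x k⌋ + if b then 1 else 0)
        else ⌊x i⌋ + if s ⟨i, h⟩ then 1 else 0) := by
    intro b
    funext i
    by_cases h : i = k
    · subst h; simp
    · simp [h]
  have hcoef : ∀ b : Bool,
      (∏ i, if (Equiv.funSplitAt k Bool).symm (b, s) i then Int.fract (x i)
        else 1 - Int.fract (x i)) =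
      (if b then Int.fract (x k) else 1 - Int.fract (x k)) *
        ∏ i : {j : Fin d // j ≠ k}, if s i then Int.fract (x i.1) else 1 - Int.fract (x i.1) := by
    intro b
    rw [prod_split_at k]
    congr 1
    · simp
    · refine Finset.prod_congr rfl fun i _ => ?_
      simp [i.2]
  rw [harg, harg, hcoef, hcoef]
  unfold plInterp
  simp only [Bool.false_eq_true, if_true, if_false, add_zero]
  ring

/-- if `φ(c) - φ(c + e_k) ≥ 1` for every integer point `c` with
`v ≤ c` and `c + e_k ≤ w` (a box inside `{0,…,29}^d`), then the multilinear extension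
decreases at rate at least one along direction `e_k` throughout the real box `Π [v_i,w_i]`:
`φ̄(x) - φ̄(x + δ·e_k) ≥ δ` whenever `x` and `x + δ·e_k` are in the box and `δ ≥ 0`. -/
theorem stmt8 (d : ℕ) (hd : 1 ≤ d) (φ : (Fin d → ℤ) → ℝ) (k : Fin d)
    (v w : Fin d → ℤ)
    (hv : ∀ i, 0 ≤ v i ∧ v i ≤ 29) (hw : ∀ i, 0 ≤ w i ∧ w i ≤ 29)
    (hvw : ∀ i, v i ≤ w i)
    (hstep : ∀ c : Fin d → ℤ, (∀ i, v i ≤ c i) →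
      (∀ i, c i + (if i = k then 1 else 0) ≤ w i) →
      φ c - φ (fun i => c i + if i = k then 1 else 0) ≥ 1) :
    ∀ x : Fin d → ℝ, (∀ i, (v i : ℝ) ≤ x i ∧ x i ≤ (w i : ℝ)) →
    ∀ δ : ℝ, 0 ≤ δ →
      (∀ i, (v i : ℝ) ≤ x i + (if i = k then δ else 0) ∧
            x i + (if i = k then δ else 0) ≤ (w i : ℝ)) →
      mulExt d φ x - mulExt d φ (fun i => x i + if i = k then δ else 0) ≥ δ := by
  intro x hx δ hδ hxy
  set y : Fin d → ℝ := fun i => x i + if i = k then δ else 0 with hy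
  have hyk : y k = x k + δ := by simp [hy]
  have hyi : ∀ i : Fin d, i ≠ k → y i = x i := by
    intro i hi; simp [hy, hi]
  rw [mulExt_split d φ k x, mulExt_split d φ k y]
  -- rewrite the y-sum in terms of x
  have hysum : (∑ s : {j : Fin d // j ≠ k} → Bool,
      (∏ i : {j : Fin d // j ≠ k}, if s i then Int.fract (y i.1) else 1 - Int.fract (y i.1)) *
        plInterp (fun m => φ (fun i => if h : i = k then m
          else ⌊y i⌋ + if s ⟨i, h⟩ then 1 else 0)) (y k)) =
      ∑ s : {j : Fin d // j ≠ k} → Bool,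
      (∏ i : {j : Fin d // j ≠ k}, if s i then Int.fract (x i.1) else 1 - Int.fract (x i.1)) *
        plInterp (fun m => φ (fun i => if h : i = k then m
          else ⌊x i⌋ + if s ⟨i, h⟩ then 1 else 0)) (x k + δ) := by
    refine Finset.sum_congr rfl fun s _ => ?_
    congr 1
    · exact Finset.prod_congr rfl fun i _ => by rw [hyi i.1 i.2]
    · rw [hyk]
      congr 1
      funext m
      congr 1
      funext i
      by_cases h : i = k
      · simp [h]
      · simp only [h, dif_neg, hyi i h]
  rw [hysum]
  rw [← Finset.sum_sub_distrib]
  -- the coefficients sum to 1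
  have hC1 : (∑ s : {j : Fin d // j ≠ k} → Bool,
      ∏ i : {j : Fin d // j ≠ k}, if s i then Int.fract (x i.1) else 1 - Int.fract (x i.1)) = 1 := by
    have h := Finset.prod_univ_sum (fun _ : {j : Fin d // j ≠ k} => (Finset.univ : Finset Bool))
      (fun i b => if b then Int.fract (x i.1) else 1 - Int.fract (x i.1))
    rw [Fintype.piFinset_univ] at h
    rw [← h]
    rw [Finset.prod_eq_one]
    intro i _
    rw [Fintype.sum_bool]
    simp
  -- bound each term
  have hterm : ∀ s : {j : Fin d // j ≠ k} → Bool,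
      (∏ i : {j : Fin d // j ≠ k}, if s i then Int.fract (x i.1) else 1 - Int.fract (x i.1)) * δ ≤
      (∏ i : {j : Fin d // j ≠ k}, if s i then Int.fract (x i.1) else 1 - Int.fract (x i.1)) *
        plInterp (fun m => φ (fun i => if h : i = k then m
          else ⌊x i⌋ + if s ⟨i, h⟩ then 1 else 0)) (x k) -
      (∏ i : {j : Fin d // j ≠ k}, if s i then Int.fract (x i.1) else 1 - Int.fract (x i.1)) *
        plInterp (fun m => φ (fun i => if h : i = k then m
          else ⌊x i⌋ + if s ⟨i, h⟩ then 1 else 0)) (x k + δ) := by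
    intro s
    set C := ∏ i : {j : Fin d // j ≠ k}, if s i then Int.fract (x i.1) else 1 - Int.fract (x i.1)
      with hCdef
    set ψ := fun m => φ (fun i => if h : i = k then m
      else ⌊x i⌋ + if s ⟨i, h⟩ then 1 else 0) with hψdef
    have hC0 : 0 ≤ C := by
      refine Finset.prod_nonneg fun i _ => ?_
      rcases s i with _ | _
      · simp [Int.fract_lt_one (x i.1) |>.le]
      · simp [Int.fract_nonneg (x i.1)]
    by_cases hz : ∃ i : {j : Fin d // j ≠ k}, s i = true ∧ Int.fract (x i.1) = 0
    · obtain ⟨i, hi1, hi2⟩ := hz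
      have : C = 0 := Finset.prod_eq_zero (Finset.mem_univ i) (by rw [hi1, if_pos rfl, hi2])
      rw [this]; simp
    · push_neg at hz
      -- slope condition
      have hslope : ∀ m : ℤ, v k ≤ m → m + 1 ≤ w k → ψ m - ψ (m + 1) ≥ 1 := by
        intro m hm1 hm2
        set c : Fin d → ℤ := fun j => if h : j = k then m
          else ⌊x j⌋ + if s ⟨j, h⟩ then 1 else 0 with hc
        have harg : ψ (m + 1) = φ (fun i => c i + if i = k then 1 else 0) := by
          show φ _ = φ _
          congr 1
          funext i
          by_cases h : i = k
          · simp [hc, h]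
          · simp [hc, h]
        have harg0 : ψ m = φ c := rfl
        rw [harg0, harg]
        apply hstep
        · intro i
          by_cases h : i = k
          · subst h; simpa [hc] using hm1
          · have h1 : v i ≤ ⌊x i⌋ := Int.le_floor.mpr (hx i).1
            simp only [hc, dif_neg h]
            rcases s ⟨i, h⟩ with _ | _ <;> simp <;> omega
        · intro i
          by_cases h : i = k
          · subst h; simpa [hc] using hm2
          · have h2 : ⌊x i⌋ ≤ w i := by
              have := Int.floor_le_floor (hx i).2
              simpa using this
            simp only [hc, dif_neg h, if_neg h, add_zero]
            rcases hsv : s ⟨i, h⟩ with _ | _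
            · simp [hsv, h2]
            · have hfr : Int.fract (x i) ≠ 0 := hz ⟨i, h⟩ hsv
              have hfr' : 0 < Int.fract (x i) := lt_of_le_of_ne (Int.fract_nonneg _) (Ne.symm hfr)
              have hlt : (⌊x i⌋ : ℝ) < x i := by
                have := Int.floor_add_fract (x i); linarith
              have hlt2 : (⌊x i⌋ : ℝ) < (w i : ℝ) := lt_of_lt_of_le hlt (hx i).2
              have hlt3 : ⌊x i⌋ < w i := by exact_mod_cast hlt2
              simp [hsv]
              omega
      -- apply the key lemma
      have hbig := plInterp_key ψ (v k) (w k) hslope (w k - v k).toNat (x k) (x k + δ)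
        (hx k).1 (by linarith)
        (by have := (hxy k).2; simpa using this)
        (by
          have h1 : v k ≤ ⌊x k⌋ := Int.le_floor.mpr (hx k).1
          have h2 : ⌊x k + δ⌋ ≤ w k := by
            have h3 : x k + δ ≤ (w k : ℝ) := by have := (hxy k).2; simpa using this
            have := Int.floor_le_floor h3
            simpa using this
          omega)
      have hd : δ ≤ plInterp ψ (x k) - plInterp ψ (x k + δ) := by linarith
      calc C * δ ≤ C * (plInterp ψ (x k) - plInterp ψ (x k + δ)) :=
            mul_le_mul_of_nonneg_left hd hC0
        _ = C * plInterp ψ (x k) - C * plInterp ψ (x k + δ) := by ring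
  have := Finset.sum_le_sum (s := Finset.univ) fun s _ => hterm s
  rw [← Finset.sum_mul, hC1, one_mul] at this
  exact this
end
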